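/- arXiv:1905.03308 — 7 statements merged into one kernel-verified Lean document; each statement's English description precedes it below -/
import Mathlib

section
/- Let (X, 𝓘) be an independence system and let f : 2^X → ℝ be additive with nonnegative weights, i.e., f(S) = Σ_{s∈S} f({s}) for every S ⊆ X and f({s}) ≥ 0 for every s ∈ X. Then every greedy solution G and every optimal solution O satisfy f(G) ≥ q(X, 𝓘) · f(O). -/
open Finset

variable {α : Type*} [DecidableEq α] [Fintype α]

/-- Monotone set function. -/
def SetMonotone (f : Finset α → ℝ) : Prop :=
  ∀ ⦃A B : Finset α⦄, A ⊆ B → f A ≤ f B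

/-- Submodular set function. -/
def SetSubmodular (f : Finset α → ℝ) : Prop :=
  ∀ ⦃A B : Finset α⦄, A ⊆ B → ∀ j ∉ B, f (insert j A) - f A ≥ f (insert j B) - f B

/-- Polymatroid set function: monotone, submodular, and `f ∅ = 0`. -/
def PolymatroidFn (f : Finset α → ℝ) : Prop :=
  SetMonotone f ∧ SetSubmodular f ∧ f ∅ = 0

/-- Hereditary collection of sets. -/
def Hereditary (I : Finset α → Prop) : Prop :=
  ∀ ⦃B⦄, I B → ∀ ⦃A⦄, A ⊆ B → I A

/-- Independence system: nonempty hereditary collection. -/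
def IndepSystem (I : Finset α → Prop) : Prop :=
  (∃ S, I S) ∧ Hereditary I

/-- Augmentation property. -/
def Augmentation (I : Finset α → Prop) : Prop :=
  ∀ ⦃A B⦄, I A → I B → A.card < B.card → ∃ j ∈ B, j ∉ A ∧ I (insert j A)

/-- Matroid: independence system with augmentation. -/
def IsMatroid (I : Finset α → Prop) : Prop :=
  IndepSystem I ∧ Augmentation I

/-- One step of the greedy algorithm: add a feasible element of largest gain. -/
def GreedyStep (I : Finset α → Prop) (f : Finset α → ℝ) (S S' : Finset α) : Prop :=
  ∃ a ∉ S, I (insert a S) ∧ S' = insert a S ∧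
    ∀ b ∉ S, I (insert b S) → f (insert b S) ≤ f (insert a S)

/-- Greedy solution: obtained from `∅` by greedy steps, and no further feasible addition. -/
def IsGreedy (I : Finset α → Prop) (f : Finset α → ℝ) (G : Finset α) : Prop :=
  Relation.ReflTransGen (GreedyStep I f) ∅ G ∧ ∀ a ∉ G, ¬ I (insert a G)

/-- Optimal solution: member of the constraint maximizing `f`. -/
def IsOptimal (I : Finset α → Prop) (f : Finset α → ℝ) (O : Finset α) : Prop :=
  I O ∧ ∀ S, I S → f S ≤ f O

/-- `B` is a basis of `S`: a maximal independent subset of `S`. -/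
def IsBasisOf (I : Finset α → Prop) (S B : Finset α) : Prop :=
  B ⊆ S ∧ I B ∧ ∀ ⦃B' : Finset α⦄, I B' → B ⊆ B' → B' ⊆ S → B' = B

/-- Lower rank of `S`: minimum cardinality of a basis of `S`. -/
noncomputable def lr (I : Finset α → Prop) (S : Finset α) : ℕ :=
  sInf {n : ℕ | ∃ B, IsBasisOf I S B ∧ B.card = n}

/-- Upper rank of `S`: maximum cardinality of a basis of `S`. -/
noncomputable def ur (I : Finset α → Prop) (S : Finset α) : ℕ :=
  sSup {n : ℕ | ∃ B, IsBasisOf I S B ∧ B.card = n}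

/-- Rank quotient `q(X, 𝓘)`. -/
noncomputable def rankQuotient (I : Finset α → Prop) : ℝ :=
  sInf {x : ℝ | ∃ S : Finset α, 0 < ur I S ∧ x = (lr I S : ℝ) / (ur I S : ℝ)}

/-- Total curvature `c(f)`. -/
noncomputable def totalCurvature (f : Finset α → ℝ) : ℝ :=
  sSup {x : ℝ | ∃ j : α, f {j} ≠ f ∅ ∧
    x = 1 - (f Finset.univ - f (Finset.univ.erase j)) / (f {j} - f ∅)}

/-- Partial curvature `b(f)`, over pairs `(j, A)` with `j ∈ A ∈ 𝓘`. -/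
noncomputable def partialCurvature (I : Finset α → Prop) (f : Finset α → ℝ) : ℝ :=
  sSup {x : ℝ | ∃ (j : α) (A : Finset α), I A ∧ j ∈ A ∧ f {j} ≠ f ∅ ∧
    x = 1 - (f A - f (A.erase j)) / (f {j} - f ∅)}

/-- Total `k`-batch curvature `c_k`. -/
noncomputable def batchCurvature (f : Finset α → ℝ) (k : ℕ) : ℝ :=
  sSup {x : ℝ | ∃ J : Finset α, J.card = k ∧ f J ≠ f ∅ ∧
    x = 1 - (f Finset.univ - f (Finset.univ \ J)) / (f J - f ∅)}

/-- Polymatroid function defined on a collection `𝓘`. -/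
def PolymatroidOn (I : Finset α → Prop) (f : Finset α → ℝ) : Prop :=
  f ∅ = 0 ∧ (∀ ⦃A B : Finset α⦄, A ⊆ B → I B → f A ≤ f B) ∧
    ∀ ⦃A B : Finset α⦄, A ⊆ B → ∀ j ∉ B, I (insert j B) →
      f (insert j A) - f A ≥ f (insert j B) - f B

/-- One step of the batched greedy algorithm: add a feasible batch of size `k`
of largest gain. -/
def BatchStep (I : Finset α → Prop) (f : Finset α → ℝ) (k : ℕ) (S S' : Finset α) : Prop :=
  ∃ J : Finset α, Disjoint J S ∧ J.card = k ∧ I (S ∪ J) ∧ S' = S ∪ J ∧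
    ∀ J' : Finset α, Disjoint J' S → J'.card = k → I (S ∪ J') → f (S ∪ J') ≤ f (S ∪ J)

/-- `k`-batch greedy solution: `l - 1` batches of size `k` followed by one batch of
size `m`. -/
def IsBatchGreedy (I : Finset α → Prop) (f : Finset α → ℝ) (k l m : ℕ)
    (S : Finset α) : Prop :=
  ∃ T : ℕ → Finset α, T 0 = ∅ ∧ (∀ t < l - 1, BatchStep I f k (T t) (T (t + 1))) ∧
    BatchStep I f m (T (l - 1)) S

/-!
Give every element `x` the weight `f {x}`, and for a threshold `t` write `S_t` for the elements of
`S` heavier than `t`. Greedy adds elements in order of non-increasing weight and stops only when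
blocked, so `G_t` is a basis of `(G ∪ O)_t`; since `O_t` is independent in the same set,
`q · |O_t| ≤ |G_t|` for every `t`. Integrating over `t > 0` (layer cake:
`∑ x ∈ S, f {x} = ∫_0^∞ |S_t| dt`) gives `q · f(O) ≤ f(G)`.
-/

section LayerCake

open MeasureTheory

variable {ι : Type*} (A : Finset ι) (w : ι → ℝ)

lemma Finset.natCast_card_filter_lt_eq_sum_indicator (t : ℝ) :
    (#{a ∈ A | t < w a} : ℝ) = ∑ a ∈ A, (Set.Iio (w a)).indicator (1 : ℝ → ℝ) t := by
  rw [Finset.natCast_card_filter]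
  simp [Set.indicator_apply]

lemma MeasureTheory.integrableOn_Ioi_indicator_Iio_one (x : ℝ) :
    IntegrableOn ((Set.Iio x).indicator (1 : ℝ → ℝ)) (Set.Ioi 0) := by
  rw [IntegrableOn, integrable_indicator_iff measurableSet_Iio]
  exact integrableOn_const (by simp [Measure.restrict_apply measurableSet_Iio, Set.Iio_inter_Ioi])

lemma MeasureTheory.integrableOn_card_filter_lt :
    IntegrableOn (fun t => (#{a ∈ A | t < w a} : ℝ)) (Set.Ioi 0) := by
  simp_rw [Finset.natCast_card_filter_lt_eq_sum_indicator]
  exact integrable_finsetSum _ fun a _ => integrableOn_Ioi_indicator_Iio_one (w a)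

lemma MeasureTheory.integral_card_filter_lt (hw : ∀ a ∈ A, 0 ≤ w a) :
    ∫ t in Set.Ioi 0, (#{a ∈ A | t < w a} : ℝ) = ∑ a ∈ A, w a := by
  simp_rw [Finset.natCast_card_filter_lt_eq_sum_indicator]
  rw [integral_finsetSum _ fun a _ => integrableOn_Ioi_indicator_Iio_one (w a)]
  refine Finset.sum_congr rfl fun a ha => ?_
  rw [integral_indicator_one measurableSet_Iio, Measure.real,
    Measure.restrict_apply measurableSet_Iio, Set.Iio_inter_Ioi, ← Measure.real,
    Real.volume_real_Ioo_of_le (hw a ha), sub_zero]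

variable {A w} {B : Finset ι}

lemma Finset.mul_sum_le_sum_of_mul_card_filter_lt_le (hA : ∀ a ∈ A, 0 ≤ w a)
    (hB : ∀ b ∈ B, 0 ≤ w b) (c : ℝ) (h : ∀ t > 0, c * #{b ∈ B | t < w b} ≤ #{a ∈ A | t < w a}) :
    c * ∑ b ∈ B, w b ≤ ∑ a ∈ A, w a := by
  rw [← integral_card_filter_lt A w hA, ← integral_card_filter_lt B w hB, ← integral_const_mul]
  exact setIntegral_mono_on ((integrableOn_card_filter_lt B w).const_mul c)
    (integrableOn_card_filter_lt A w) measurableSet_Ioi h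

end LayerCake

section RankQuotient

variable {α : Type*} {I : Finset α → Prop} {S A B : Finset α}

lemma exists_isBasisOf_superset (hA : I A) (hAS : A ⊆ S) : ∃ B, IsBasisOf I S B ∧ A ⊆ B := by
  classical
  obtain ⟨B, hB, hBmax⟩ :=
    ({B ∈ S.powerset | I B ∧ A ⊆ B} : Finset _).exists_maximal ⟨A, by simp [hA, hAS]⟩
  simp only [mem_filter, mem_powerset] at hB hBmax
  exact ⟨B, ⟨hB.1, hB.2.1, fun B' hB' hBB' hB'S =>
    (hBmax ⟨hB'S, hB', hB.2.2.trans hBB'⟩ hBB').antisymm hBB'⟩, hB.2.2⟩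

lemma IsBasisOf.lr_le_card (hB : IsBasisOf I S B) : lr I S ≤ #B :=
  Nat.sInf_le ⟨B, hB, rfl⟩

lemma IsBasisOf.card_le_ur (hB : IsBasisOf I S B) : #B ≤ ur I S :=
  le_csSup ⟨#S, by rintro _ ⟨B', hB', rfl⟩; exact card_le_card hB'.1⟩ ⟨B, hB, rfl⟩

lemma rankQuotient_nonneg : 0 ≤ rankQuotient I :=
  Real.sInf_nonneg (by rintro _ ⟨S, -, rfl⟩; positivity)

lemma rankQuotient_le_div (h : 0 < ur I S) : rankQuotient I ≤ lr I S / ur I S :=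
  csInf_le ⟨0, by rintro _ ⟨S, -, rfl⟩; positivity⟩ ⟨S, h, rfl⟩

lemma rankQuotient_mul_card_le_card (hA : I A) (hAS : A ⊆ S) (hB : IsBasisOf I S B) :
    rankQuotient I * #A ≤ #B := by
  obtain ⟨B', hB', hAB'⟩ := exists_isBasisOf_superset hA hAS
  have hA_ur : #A ≤ ur I S := (card_le_card hAB').trans hB'.card_le_ur
  rcases (ur I S).eq_zero_or_pos with h0 | hpos
  · simp [Nat.le_zero.mp (h0 ▸ hA_ur)]
  have hq := rankQuotient_nonneg (I := I)
  calc rankQuotient I * #A ≤ rankQuotient I * ur I S := by gcongr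
    _ ≤ lr I S / ur I S * ur I S := by gcongr; exact rankQuotient_le_div hpos
    _ = lr I S := div_mul_cancel₀ _ (by positivity)
    _ ≤ #B := by exact_mod_cast hB.lr_le_card

end RankQuotient

section Greedy

variable {α : Type*} [DecidableEq α] {I : Finset α → Prop} {f : Finset α → ℝ} {S G : Finset α}

lemma apply_insert_eq_add (hadd : ∀ S : Finset α, f S = ∑ s ∈ S, f {s}) {b : α} (hb : b ∉ S) :
    f (insert b S) = f {b} + f S := by
  rw [hadd, sum_insert hb, ← hadd]

lemma filter_lt_eq_of_reflTransGen_greedyStep (hher : Hereditary I)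
    (hadd : ∀ S : Finset α, f S = ∑ s ∈ S, f {s}) (hS : Relation.ReflTransGen (GreedyStep I f) ∅ S)
    {t : ℝ} {x : α} (hx : x ∉ S) (htx : t < f {x}) (hI : I (insert x {a ∈ S | t < f {a}})) :
    {a ∈ S | t < f {a}} = S := by
  induction hS generalizing x with
  | refl => simp
  | tail _ hstep ih =>
    obtain ⟨a, haS, -, rfl, hmax⟩ := hstep
    have hxS : x ∉ _ := fun h => hx (mem_insert_of_mem h)
    rw [filter_insert] at hI ⊢
    by_cases hta : t < f {a}
    · rw [if_pos hta] at hI ⊢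
      rw [ih hxS htx (hher hI (insert_subset_insert _ (subset_insert _ _)))]
    · rw [if_neg hta] at hI
      have hxa_le := hmax x hxS (ih hxS htx hI ▸ hI)
      rw [apply_insert_eq_add hadd hxS, apply_insert_eq_add hadd haS] at hxa_le
      linarith

lemma IsGreedy.indep (hI : IndepSystem I) (hG : IsGreedy I f G) : I G := by
  rcases hG.1.cases_tail with rfl | ⟨S, -, a, -, haI, rfl, -⟩
  · obtain ⟨S, hS⟩ := hI.1
    exact hI.2 hS (empty_subset S)
  · exact haI

lemma IsGreedy.isBasisOf_filter_lt (hI : IndepSystem I)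
    (hadd : ∀ S : Finset α, f S = ∑ s ∈ S, f {s}) (hG : IsGreedy I f G) (T : Finset α) (t : ℝ) :
    IsBasisOf I {a ∈ G ∪ T | t < f {a}} {a ∈ G | t < f {a}} := by
  refine ⟨filter_subset_filter _ subset_union_left, hI.2 (hG.indep hI) (filter_subset _ _),
    fun B hB hGB hBS => Subset.antisymm (fun y hy => ?_) hGB⟩
  have hty : t < f {y} := (mem_filter.mp (hBS hy)).2
  by_contra hyGt
  have hyG : y ∉ G := fun hyG => hyGt (mem_filter.mpr ⟨hyG, hty⟩)
  have hIy : I (insert y {a ∈ G | t < f {a}}) := hI.2 hB (insert_subset hy hGB)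
  exact hG.2 y hyG (filter_lt_eq_of_reflTransGen_greedyStep hI.2 hadd hG.1 hyG hty hIy ▸ hIy)

lemma IsGreedy.rankQuotient_mul_le (hI : IndepSystem I)
    (hadd : ∀ S : Finset α, f S = ∑ s ∈ S, f {s}) (hnn : ∀ s : α, 0 ≤ f {s})
    (hG : IsGreedy I f G) {O : Finset α} (hO : I O) : rankQuotient I * f O ≤ f G := by
  have hthreshold : ∀ t > 0, rankQuotient I * #{o ∈ O | t < f {o}} ≤ #{g ∈ G | t < f {g}} :=
    fun t _ => rankQuotient_mul_card_le_card (hI.2 hO (filter_subset _ _))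
      (filter_subset_filter _ subset_union_right) (hG.isBasisOf_filter_lt hI hadd O t)
  rw [hadd G, hadd O]
  exact mul_sum_le_sum_of_mul_card_filter_lt_le (fun a _ => hnn a) (fun b _ => hnn b) _ hthreshold

end Greedy

theorem greedy_bound_rank_quotient_general {α : Type*} [DecidableEq α]
    (I : Finset α → Prop) (hI : IndepSystem I)
    (f : Finset α → ℝ)
    (hadd : ∀ S : Finset α, f S = ∑ s ∈ S, f {s})
    (hnn : ∀ s : α, 0 ≤ f {s})
    (G O : Finset α) (hG : IsGreedy I f G) (hO : IsOptimal I f O) :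
    f G ≥ rankQuotient I * f O :=
  hG.rankQuotient_mul_le hI hadd hnn hO.1

/-- Performance bound for the greedy strategy in an independence system with an
additive objective: `f(G) ≥ q(X, 𝓘) · f(O)`. -/
theorem greedy_bound_rank_quotient {α : Type*} [DecidableEq α] [Fintype α]
    (I : Finset α → Prop) (hI : IndepSystem I)
    (f : Finset α → ℝ)
    (hadd : ∀ S : Finset α, f S = ∑ s ∈ S, f {s})
    (hnn : ∀ s : α, 0 ≤ f {s})
    (G O : Finset α) (hG : IsGreedy I f G) (hO : IsOptimal I f O) :
    f G ≥ rankQuotient I * f O :=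
  greedy_bound_rank_quotient_general I hI f hadd hnn G O hG hO
end

section
/- Let (X, 𝓘) be the intersection of p matroids, i.e., 𝓘 = 𝓘^1 ∩ ⋯ ∩ 𝓘^p where each (X, 𝓘^i) is a matroid, and let f : 2^X → ℝ be a polymatroid set function. Then every greedy solution G and every optimal solution O satisfy (1 + p) · f(G) ≥ f(O). -/
open Finset

variable {α : Type*} [DecidableEq α] [Fintype α]

/-
The charging argument of Fisher, Nemhauser and Wolsey. Let `∅ = g₀ ⊂ g₁ ⊂ ⋯ ⊂ g_t = G` be the
greedy run and `γₛ = f(gₛ₊₁) - f(gₛ)` its gains, which are nonincreasing by submodularity and the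
greedy choice. Submodularity gives `f(O) ≤ f(G) + ∑_{o ∈ O \ G} (f(G + o) - f(G))`. Charge each
`o ∈ O \ G` to the step `s` after which it stops being addable; its marginal gain on `G` is at most
`γₛ`. After `i` steps at most `p · i` elements of `O` are blocked, since in each matroid `O` has at
most `|gᵢ| = i` elements that cannot be added to `gᵢ`. As the gains decrease, the total charge is
therefore at most `p · ∑ₛ γₛ = p · f(G)`.
-/

theorem Relation.ReflTransGen.exists_seq {β : Type*} {r : β → β → Prop} {a b : β}
    (h : Relation.ReflTransGen r a b) :
    ∃ (n : ℕ) (g : ℕ → β), g 0 = a ∧ (∀ i < n, r (g i) (g (i + 1))) ∧ ∀ i, n ≤ i → g i = b := by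
  induction h using Relation.ReflTransGen.head_induction_on with
  | refl => exact ⟨0, fun _ => b, rfl, by simp, fun _ _ => rfl⟩
  | head hac _ ih =>
    obtain ⟨n, g, hg0, hstep, hstop⟩ := ih
    refine ⟨n + 1, fun | 0 => _ | i + 1 => g i, rfl, ?_, ?_⟩
    · rintro (_ | i) hi
      · simpa [hg0] using hac
      · exact hstep i (by omega)
    · rintro (_ | i) hi
      · omega
      · exact hstop i (by omega)

theorem sum_le_mul_sum_range_of_layers {ι : Type*} [DecidableEq ι] {T : ℕ → Finset ι}
    (hT : Monotone T) (hT0 : T 0 = ∅) {p : ℕ} (hcard : ∀ i, #(T i) ≤ p * i)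
    {h : ι → ℝ} {γ : ℕ → ℝ} (hγ : Antitone γ) (hh : ∀ s, ∀ o ∈ T (s + 1) \ T s, h o ≤ γ s)
    {n : ℕ} (hγn : 0 ≤ γ n) :
    ∑ o ∈ T n, h o ≤ p * ∑ s ∈ range n, γ s := by
  have slack_nonneg (i : ℕ) : 0 ≤ (p * i - #(T i) : ℝ) :=
    sub_nonneg.2 (by exact_mod_cast hcard i)
  -- Abel summation, carrying the unused part `p * i - #(T i)` of the budget at price `γ i`.
  have key : ∀ i, ∑ o ∈ T i, h o + (p * i - #(T i)) * γ i ≤ p * ∑ s ∈ range i, γ s := by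
    intro i
    induction i with
    | zero => simp [hT0]
    | succ i ih =>
      have hsub : T i ⊆ T (i + 1) := hT i.le_succ
      have hnew : ∑ o ∈ T (i + 1) \ T i, h o ≤ (#(T (i + 1)) - #(T i)) * γ i := by
        rw [← cast_card_sdiff hsub, ← nsmul_eq_mul]
        exact sum_le_card_nsmul _ _ _ (hh i)
      have hprice : (p * (i + 1 : ℕ) - #(T (i + 1))) * γ (i + 1) ≤
          (p * (i + 1 : ℕ) - #(T (i + 1))) * γ i :=
        mul_le_mul_of_nonneg_left (hγ i.le_succ) (slack_nonneg _)
      rw [← sum_sdiff hsub, sum_range_succ]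
      push_cast at hprice ⊢
      linarith
  have := key n
  have := mul_nonneg (slack_nonneg n) hγn
  linarith

theorem hereditary_of_iff_forall {β ι : Type*} {I : Finset β → Prop} {Im : ι → Finset β → Prop}
    (hm : ∀ i, Hereditary (Im i)) (hI : ∀ S, I S ↔ ∀ i, Im i S) : Hereditary I :=
  fun _ hB _ hAB => (hI _).2 fun i => hm i ((hI _).1 hB i) hAB

section

variable {β : Type*} [DecidableEq β]

theorem SetSubmodular.sub_le_sum_sub {f : Finset β → ℝ} (hf : SetSubmodular f)
    (B T : Finset β) :
    f (B ∪ T) - f B ≤ ∑ o ∈ T, (f (insert o B) - f B) := by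
  induction T using Finset.induction with
  | empty => simp
  | insert o T ho ih =>
    rw [sum_insert ho, union_insert]
    by_cases hoB : o ∈ B
    · rw [insert_eq_of_mem (mem_union_left T hoB), insert_eq_of_mem hoB]
      linarith
    · have := hf (subset_union_left (s₁ := B) (s₂ := T)) o (by simp [hoB, ho])
      linarith

open scoped Classical in
theorem IsMatroid.card_filter_not_insert_le {M : Finset β → Prop} (hM : IsMatroid M)
    {A S : Finset β} (hA : M A) (hS : M S) : #(A.filter fun o => ¬ M (insert o S)) ≤ #S := by
  by_contra! hlt
  obtain ⟨o, ho, -, hins⟩ := hM.2 hS (hM.1.2 hA (filter_subset _ A)) hlt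
  exact (mem_filter.1 ho).2 hins

open scoped Classical in
theorem card_filter_not_insert_le_of_iff_forall {p : ℕ} {I : Finset β → Prop}
    {Im : Fin p → Finset β → Prop} (hm : ∀ i, IsMatroid (Im i)) (hI : ∀ S, I S ↔ ∀ i, Im i S)
    {A S : Finset β} (hA : I A) (hS : I S) :
    #(A.filter fun o => ¬ I (insert o S)) ≤ p * #S := by
  have hcover : A.filter (fun o => ¬ I (insert o S)) ⊆
      univ.biUnion fun i => A.filter fun o => ¬ Im i (insert o S) := by
    intro o ho
    obtain ⟨hoA, hblocked⟩ := mem_filter.1 ho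
    obtain ⟨i, hi⟩ := not_forall.1 (mt (hI _).2 hblocked)
    exact mem_biUnion.2 ⟨i, mem_univ i, mem_filter.2 ⟨hoA, hi⟩⟩
  calc #(A.filter fun o => ¬ I (insert o S))
      ≤ #(univ.biUnion fun i => A.filter fun o => ¬ Im i (insert o S)) := card_le_card hcover
    _ ≤ #(univ : Finset (Fin p)) * #S := card_biUnion_le_card_mul _ _ _ fun i _ =>
        (hm i).card_filter_not_insert_le ((hI A).1 hA i) ((hI S).1 hS i)
    _ = p * #S := by rw [card_univ, Fintype.card_fin]

namespace GreedyStep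

variable {I : Finset β → Prop} {f : Finset β → ℝ} {S S' S'' : Finset β}

theorem subset (h : GreedyStep I f S S') : S ⊆ S' := by
  obtain ⟨a, -, -, rfl, -⟩ := h
  exact subset_insert a S

theorem card_eq (h : GreedyStep I f S S') : #S' = #S + 1 := by
  obtain ⟨a, ha, -, rfl, -⟩ := h
  exact card_insert_of_notMem ha

theorem indep (h : GreedyStep I f S S') : I S' := by
  obtain ⟨a, -, hI, rfl, -⟩ := h
  exact hI

theorem marginal_le (hf : SetSubmodular f) (h : GreedyStep I f S S') {B : Finset β} {o : β}
    (hSB : S ⊆ B) (hoB : o ∉ B) (hI : I (insert o S)) :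
    f (insert o B) - f B ≤ f S' - f S := by
  obtain ⟨a, -, -, rfl, hmax⟩ := h
  have := hmax o (fun hoS => hoB (hSB hoS)) hI
  have := hf hSB o hoB
  linarith

theorem gain_antitone (hI : Hereditary I) (hf : SetSubmodular f) (h : GreedyStep I f S S')
    (h' : GreedyStep I f S' S'') : f S'' - f S' ≤ f S' - f S := by
  obtain ⟨a, ha, hIa, rfl, -⟩ := h'
  exact h.marginal_le hf h.subset ha (hI hIa (insert_subset_insert a h.subset))

end GreedyStep

/-- Padding the run with `G` makes its gains nonincreasing on all of `ℕ`, vanishing from `t` on. -/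
def IsGreedyRun (I : Finset β → Prop) (f : Finset β → ℝ) (g : ℕ → Finset β) (t : ℕ)
    (G : Finset β) : Prop :=
  (∀ i < t, GreedyStep I f (g i) (g (i + 1))) ∧ ∀ i, t ≤ i → g i = G

namespace IsGreedyRun

variable {I : Finset β → Prop} {f : Finset β → ℝ} {g : ℕ → Finset β} {t : ℕ} {G : Finset β}

theorem monotone (h : IsGreedyRun I f g t G) : Monotone g := by
  refine monotone_nat_of_le_succ fun i => ?_
  by_cases hi : i < t
  · exact (h.1 i hi).subset
  · rw [h.2 i (by omega), h.2 (i + 1) (by omega)]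

theorem subset (h : IsGreedyRun I f g t G) (i : ℕ) : g i ⊆ G :=
  h.2 (i + t) (by omega) ▸ h.monotone (by omega : i ≤ i + t)

theorem card_le (h : IsGreedyRun I f g t G) (hg0 : g 0 = ∅) (i : ℕ) : #(g i) ≤ i := by
  induction i with
  | zero => simp [hg0]
  | succ i ih =>
    by_cases hi : i < t
    · rw [(h.1 i hi).card_eq]
      omega
    · rw [h.2 (i + 1) (by omega), ← h.2 i (by omega)]
      omega

theorem indep (h : IsGreedyRun I f g t G) (hg0 : I (g 0)) (i : ℕ) : I (g i) := by
  induction i with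
  | zero => exact hg0
  | succ i ih =>
    by_cases hi : i < t
    · exact (h.1 i hi).indep
    · rwa [h.2 (i + 1) (by omega), ← h.2 i (by omega)]

theorem gain_antitone (h : IsGreedyRun I f g t G) (hI : Hereditary I) (hmono : SetMonotone f)
    (hsubm : SetSubmodular f) : Antitone fun s => f (g (s + 1)) - f (g s) := by
  refine antitone_nat_of_succ_le fun s => ?_
  by_cases hs : s + 1 < t
  · exact (h.1 s (by omega)).gain_antitone hI hsubm (h.1 (s + 1) hs)
  · have := hmono (h.monotone (by omega : s ≤ s + 1))
    rw [h.2 (s + 1) (by omega)] at this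
    rw [h.2 (s + 1 + 1) (by omega), h.2 (s + 1) (by omega)]
    linarith

theorem marginal_le (h : IsGreedyRun I f g t G) (hsubm : SetSubmodular f) {s : ℕ} {o : β}
    (hoG : o ∉ G) (hin : I (insert o (g s))) (hout : ¬ I (insert o (g (s + 1)))) :
    f (insert o G) - f G ≤ f (g (s + 1)) - f (g s) := by
  have hs : s < t := by
    by_contra! hs
    rw [h.2 (s + 1) (by omega), ← h.2 s hs] at hout
    exact hout hin
  exact (h.1 s hs).marginal_le hsubm (h.subset s) hoG hin

open scoped Classical in
theorem blocked_monotone (h : IsGreedyRun I f g t G) (hI : Hereditary I) (A : Finset β) :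
    Monotone fun s => A.filter fun o => ¬ I (insert o (g s)) :=
  fun _ _ hss' => monotone_filter_right _ fun o _ hblocked hI' =>
    hblocked (hI hI' (insert_subset_insert o (h.monotone hss')))

open scoped Classical in
theorem card_blocked_le (h : IsGreedyRun I f g t G) (hg0 : g 0 = ∅) {p : ℕ}
    {Im : Fin p → Finset β → Prop} (hm : ∀ i, IsMatroid (Im i)) (hI : ∀ S, I S ↔ ∀ i, Im i S)
    {A : Finset β} (hA : I A) (i : ℕ) :
    #(A.filter fun o => ¬ I (insert o (g i))) ≤ p * i := by
  have hI0 : I (g 0) :=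
    hg0 ▸ hereditary_of_iff_forall (fun i => (hm i).1.2) hI hA (empty_subset A)
  calc #(A.filter fun o => ¬ I (insert o (g i)))
      ≤ p * #(g i) := card_filter_not_insert_le_of_iff_forall hm hI hA (h.indep hI0 i)
    _ ≤ p * i := Nat.mul_le_mul_left p (h.card_le hg0 i)

end IsGreedyRun

end

theorem greedy_bound_matroid_intersection_general {α : Type*} [DecidableEq α]
    (p : ℕ)
    (I : Finset α → Prop) (Im : Fin p → Finset α → Prop)
    (hm : ∀ i : Fin p, IsMatroid (Im i))
    (hI : ∀ S : Finset α, I S ↔ ∀ i : Fin p, Im i S)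
    (f : Finset α → ℝ) (hf : PolymatroidFn f)
    (G O : Finset α) (hG : IsGreedy I f G) (hO : IsOptimal I f O) :
    (1 + (p : ℝ)) * f G ≥ f O := by
  classical
  obtain ⟨hmono, hsubm, hf0⟩ := hf
  obtain ⟨t, g, hg0, hstep, hstop⟩ := hG.1.exists_seq
  have hrun : IsGreedyRun I f g t G := ⟨hstep, hstop⟩
  have hhered : Hereditary I := hereditary_of_iff_forall (fun i => (hm i).1.2) hI
  set T : ℕ → Finset α := fun s => (O \ G).filter fun o => ¬ I (insert o (g s))
  have hT0 : T 0 = ∅ := filter_false_of_mem fun o ho => not_not.2 <| hg0 ▸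
    hhered hO.1 (insert_subset_iff.2 ⟨(mem_sdiff.1 ho).1, empty_subset _⟩)
  have hTt : T t = O \ G :=
    filter_true_of_mem fun o ho => hstop t le_rfl ▸ hG.2 o (mem_sdiff.1 ho).2
  have hlayer (s : ℕ) :
      ∀ o ∈ T (s + 1) \ T s, f (insert o G) - f G ≤ f (g (s + 1)) - f (g s) := by
    intro o ho
    obtain ⟨⟨hoOG, hout⟩, hin⟩ := mem_sdiff.1 ho |>.imp mem_filter.1 id
    exact hrun.marginal_le hsubm (mem_sdiff.1 hoOG).2
      (not_not.1 fun h => hin (mem_filter.2 ⟨hoOG, h⟩)) hout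
  have hcharge :
      ∑ o ∈ T t, (f (insert o G) - f G) ≤ p * ∑ s ∈ range t, (f (g (s + 1)) - f (g s)) :=
    sum_le_mul_sum_range_of_layers (hrun.blocked_monotone hhered _) hT0
      (fun i => (card_le_card (filter_subset_filter _ sdiff_subset)).trans
        (hrun.card_blocked_le hg0 hm hI hO.1 i))
      (hrun.gain_antitone hhered hmono hsubm) hlayer
      (by rw [hstop (t + 1) (by omega), hstop t le_rfl, sub_self])
  rw [hTt, sum_range_sub (fun s => f (g s)), hstop t le_rfl, hg0, hf0, sub_zero] at hcharge
  calc f O ≤ f (G ∪ (O \ G)) :=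
      hmono (subset_union_right.trans_eq union_sdiff_self_eq_union.symm)
    _ ≤ f G + ∑ o ∈ O \ G, (f (insert o G) - f G) := by
      linarith [hsubm.sub_le_sum_sub G (O \ G)]
    _ ≤ (1 + p) * f G := by linarith

/-- Greedy bound for the intersection of `p` matroids with a polymatroid objective:
`(1 + p) · f(G) ≥ f(O)`. -/
theorem greedy_bound_matroid_intersection {α : Type*} [DecidableEq α] [Fintype α]
    (p : ℕ) (hp : 0 < p)
    (I : Finset α → Prop) (Im : Fin p → Finset α → Prop)
    (hm : ∀ i : Fin p, IsMatroid (Im i))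
    (hI : ∀ S : Finset α, I S ↔ ∀ i : Fin p, Im i S)
    (f : Finset α → ℝ) (hf : PolymatroidFn f)
    (G O : Finset α) (hG : IsGreedy I f G) (hO : IsOptimal I f O) :
    (1 + (p : ℝ)) * f G ≥ f O :=
  greedy_bound_matroid_intersection_general p I Im hm hI f hf G O hG hO
end

section
/- Let K ≥ 1 with K ≤ |X|, let (X, 𝓘) be the uniform matroid of rank K, and let f : 2^X → ℝ be a polymatroid set function. Then every greedy solution G and every optimal solution O satisfy f(G) ≥ (1 − (1 − 1/K)^K) · f(O); moreover 1 − (1 − 1/K)^K > 1 − 1/e. -/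
open Finset

variable {α : Type*} [DecidableEq α] [Fintype α]

private lemma telescope_submod {α : Type*} [DecidableEq α] (f : Finset α → ℝ)
    (hsub : SetSubmodular f) (b : Finset α) :
    ∀ T : Finset α, (∀ j ∈ T, j ∉ b) →
      f (b ∪ T) - f b ≤ ∑ j ∈ T, (f (insert j b) - f b) := by
  intro T
  induction T using Finset.induction_on with
  | empty => simp
  | @insert x T hx ih =>
    intro h
    have hxb : x ∉ b := h x (Finset.mem_insert_self x T)
    have hxbT : x ∉ b ∪ T := by simp [hxb, hx]
    have hsub' := hsub (Finset.subset_union_left (s₁ := b) (s₂ := T)) x hxbT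
    have ih' := ih (fun j hj => h j (Finset.mem_insert_of_mem hj))
    have hrw : b ∪ insert x T = insert x (b ∪ T) := Finset.union_insert x b T
    rw [hrw, Finset.sum_insert hx]
    linarith

/-- Greedy bound for a uniform matroid of rank `K` with a polymatroid objective:
`f(G) ≥ (1 - (1 - 1/K)^K) · f(O)`, and `1 - (1 - 1/K)^K > 1 - 1/e`. -/
theorem greedy_bound_uniform_matroid {α : Type*} [DecidableEq α] [Fintype α]
    (K : ℕ) (hK1 : 1 ≤ K) (hK2 : K ≤ Fintype.card α)
    (f : Finset α → ℝ) (hf : PolymatroidFn f)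
    (G O : Finset α)
    (hG : IsGreedy (fun S : Finset α => S.card ≤ K) f G)
    (hO : IsOptimal (fun S : Finset α => S.card ≤ K) f O) :
    f G ≥ (1 - (1 - 1 / (K : ℝ)) ^ K) * f O ∧
      1 - (1 - 1 / (K : ℝ)) ^ K > 1 - 1 / Real.exp 1 := by

  obtain ⟨hmono, hsub, hempty⟩ := hf
  have hKpos : (0:ℝ) < K := by exact_mod_cast hK1
  have hKne : (K:ℝ) ≠ 0 := ne_of_gt hKpos
  have hq0 : (0:ℝ) ≤ 1 - 1/(K:ℝ) := by
    have : 1/(K:ℝ) ≤ 1 := by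
      rw [div_le_one hKpos]; exact_mod_cast hK1
    linarith
  have hO0 : 0 ≤ f O := by
    have := hmono (Finset.empty_subset O)
    linarith [hempty ▸ this]
  -- invariant along greedy chain
  have key : ∀ S : Finset α, Relation.ReflTransGen (GreedyStep (fun S : Finset α => S.card ≤ K) f) ∅ S →
      S.card ≤ K ∧ f O - f S ≤ (1 - 1/(K:ℝ))^S.card * f O := by
    intro S h
    induction h with
    | refl =>
      refine ⟨by simp, ?_⟩
      simp [hempty]
    | tail hst step ih =>
      rename_i b c
      obtain ⟨a, haS, hfeas, rfl, hmax⟩ := step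
      have hcard : (insert a b).card = b.card + 1 := Finset.card_insert_of_notMem haS
      have hbK : b.card + 1 ≤ K := by rw [hcard] at hfeas; exact hfeas
      refine ⟨by rw [hcard]; exact hbK, ?_⟩
      -- step inequality
      have hOb : O ⊆ b ∪ (O \ b) := by
        intro x hx
        by_cases hxb : x ∈ b
        · exact Finset.mem_union_left _ hxb
        · exact Finset.mem_union_right _ (Finset.mem_sdiff.mpr ⟨hx, hxb⟩)
      have h1 : f O ≤ f (b ∪ (O \ b)) := hmono hOb
      have h2 := telescope_submod f hsub b (O \ b) (fun j hj => (Finset.mem_sdiff.mp hj).2)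
      have gain_nonneg : 0 ≤ f (insert a b) - f b := by
        linarith [hmono (Finset.subset_insert a b)]
      have h3 : ∀ j ∈ O \ b, f (insert j b) - f b ≤ f (insert a b) - f b := by
        intro j hj
        have hjb := (Finset.mem_sdiff.mp hj).2
        have hjc : (insert j b).card ≤ K := by
          rw [Finset.card_insert_of_notMem hjb]; exact hbK
        linarith [hmax j hjb hjc]
      have h4 : ∑ j ∈ O \ b, (f (insert j b) - f b) ≤ ((O \ b).card : ℝ) * (f (insert a b) - f b) := by
        have := Finset.sum_le_card_nsmul (O \ b) (fun j => f (insert j b) - f b)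
          (f (insert a b) - f b) h3
        simpa [nsmul_eq_mul] using this
      have h5 : ((O \ b).card : ℝ) ≤ (K:ℝ) := by
        have h5a : (O \ b).card ≤ O.card := Finset.card_le_card (Finset.sdiff_subset)
        have h5b : O.card ≤ K := hO.1
        exact_mod_cast le_trans h5a h5b
      have h6 : f O - f b ≤ (K:ℝ) * (f (insert a b) - f b) := by
        have : ((O \ b).card : ℝ) * (f (insert a b) - f b) ≤ (K:ℝ) * (f (insert a b) - f b) :=
          mul_le_mul_of_nonneg_right h5 gain_nonneg
        linarith
      have h7 : (f O - f b) / (K:ℝ) ≤ f (insert a b) - f b := by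
        rw [div_le_iff₀ hKpos]; linarith [h6, mul_comm (K:ℝ) (f (insert a b) - f b)]
      have hstep : f O - f (insert a b) ≤ (1 - 1/(K:ℝ)) * (f O - f b) := by
        have hring : (1 - 1/(K:ℝ)) * (f O - f b) = (f O - f b) - (f O - f b)/(K:ℝ) := by
          field_simp
        rw [hring]; linarith
      have hih := ih.2
      have : (1 - 1/(K:ℝ)) * (f O - f b) ≤ (1 - 1/(K:ℝ)) * ((1 - 1/(K:ℝ))^b.card * f O) :=
        mul_le_mul_of_nonneg_left hih hq0
      rw [hcard, pow_succ]
      calc f O - f (insert a b) ≤ (1 - 1/(K:ℝ)) * (f O - f b) := hstep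
        _ ≤ (1 - 1/(K:ℝ)) * ((1 - 1/(K:ℝ))^b.card * f O) := this
        _ = (1 - 1/(K:ℝ))^b.card * (1 - 1/(K:ℝ)) * f O := by ring
  obtain ⟨hGK, hGbound⟩ := key G hG.1
  -- G has exactly K elements
  have hGcard : G.card = K := by
    by_contra hne
    have hlt : G.card < K := lt_of_le_of_ne hGK hne
    have hGuniv : G ≠ Finset.univ := by
      intro h
      rw [h, Finset.card_univ] at hlt
      omega
    obtain ⟨a, ha⟩ : ∃ a, a ∉ G := by
      by_contra hc
      push_neg at hc
      exact hGuniv (Finset.eq_univ_iff_forall.mpr hc)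
    have := hG.2 a ha
    apply this
    rw [Finset.card_insert_of_notMem ha]
    omega
  constructor
  · rw [hGcard] at hGbound
    nlinarith [hGbound]
  · have h1 : (1 - 1/(K:ℝ)) < Real.exp (-(1/(K:ℝ))) := by
      have hne' : -(1/(K:ℝ)) ≠ 0 := by
        simp [hKne]
      have := Real.add_one_lt_exp hne'
      linarith
    have h2 : (1 - 1/(K:ℝ))^K < Real.exp (-(1/(K:ℝ)))^K := by
      apply pow_lt_pow_left₀ h1 hq0
      omega
    have h3 : Real.exp (-(1/(K:ℝ)))^K = Real.exp (-1) := by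
      rw [← Real.exp_nat_mul]
      congr 1
      field_simp
    rw [h3] at h2
    have h4 : Real.exp (-1) = 1 / Real.exp 1 := by
      rw [Real.exp_neg]; exact (one_div _).symm
    rw [h4] at h2
    linarith
end

section
/- Let (X, 𝓘) be a matroid and let f : 2^X → ℝ be a polymatroid set function with f({j}) > 0 for some j ∈ X, with total curvature c. Then every greedy solution G and every optimal solution O satisfy (1 + c) · f(G) ≥ f(O). -/
open Finset

variable {α : Type*} [DecidableEq α] [Fintype α]

section AuxLemmas

variable {α : Type*} [DecidableEq α] [Fintype α]

lemma abel_identity (d ρ : ℕ → ℝ) (n : ℕ) :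
    ∑ i ∈ range n, d i * ρ i =
      ∑ i ∈ range n, (∑ j ∈ range (i + 1), d j) * (ρ i - ρ (i + 1))
        + (∑ j ∈ range n, d j) * ρ n := by
  induction n with
  | zero => simp
  | succ n ih => simp only [Finset.sum_range_succ, ih]; ring

lemma abel_sum (d ρ : ℕ → ℝ) (k : ℕ) (hρ0 : ∀ i, i < k → 0 ≤ ρ i)
    (hanti : ∀ i, i + 1 < k → ρ (i + 1) ≤ ρ i)
    (hD : ∀ M, M ≤ k → 0 ≤ ∑ i ∈ range M, d i) :
    0 ≤ ∑ i ∈ range k, d i * ρ i := by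
  set ρ' : ℕ → ℝ := fun i => if i < k then ρ i else 0 with hρ'
  have hsame : ∑ i ∈ range k, d i * ρ i = ∑ i ∈ range k, d i * ρ' i := by
    apply Finset.sum_congr rfl
    intro i hi
    rw [mem_range] at hi
    simp [hρ', hi]
  rw [hsame, abel_identity d ρ' k]
  have h1 : 0 ≤ ∑ i ∈ range k, (∑ j ∈ range (i + 1), d j) * (ρ' i - ρ' (i + 1)) := by
    apply Finset.sum_nonneg
    intro i hi
    rw [mem_range] at hi
    apply mul_nonneg (hD (i + 1) hi)
    have hii : ρ' i = ρ i := by simp [hρ', hi]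
    by_cases h2 : i + 1 < k
    · have : ρ' (i + 1) = ρ (i + 1) := by simp [hρ', h2]
      rw [hii, this]
      linarith [hanti i h2]
    · have : ρ' (i + 1) = 0 := by simp [hρ', h2]
      rw [hii, this]
      linarith [hρ0 i hi]
  have h2 : ρ' k = 0 := by simp [hρ']
  rw [h2]
  linarith

lemma telescope_upper (f : Finset α → ℝ) (hf : PolymatroidFn f) (A : Finset α) :
    ∀ D : Finset α, f (A ∪ D) ≤ f A + ∑ j ∈ D, (f (insert j A) - f A) := by
  intro D
  induction D using Finset.induction_on with
  | empty => simp
  | @insert j D hjD ih =>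
    rw [Finset.sum_insert hjD]
    have hU : A ∪ insert j D = insert j (A ∪ D) := union_insert j A D
    by_cases hj : j ∈ A ∪ D
    · rw [hU, Finset.insert_eq_self.2 hj]
      have hjA : 0 ≤ f (insert j A) - f A := by
        rcases Finset.mem_union.1 hj with h | h
        · rw [Finset.insert_eq_self.2 h]; linarith
        · exact absurd h hjD
      linarith
    · have := hf.2.1 (Finset.subset_union_left : A ⊆ A ∪ D) j hj
      rw [hU]
      linarith

lemma telescope_lower (f : Finset α → ℝ) (hf : PolymatroidFn f) (A : Finset α) :
    ∀ D : Finset α, Disjoint D A →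
      f A + ∑ g ∈ D, (f Finset.univ - f (Finset.univ.erase g)) ≤ f (A ∪ D) := by
  intro D
  induction D using Finset.induction_on with
  | empty => simp
  | @insert g D hgD ih =>
    intro hdisj
    have hgA : g ∉ A := fun h =>
      (Finset.disjoint_left.1 hdisj (Finset.mem_insert_self g D)) h
    have hdisj' : Disjoint D A := (Finset.disjoint_insert_left.1 hdisj).2
    have hgAD : g ∉ A ∪ D := by simp [hgA, hgD]
    have hsubset : A ∪ D ⊆ Finset.univ.erase g :=
      Finset.subset_erase.2 ⟨Finset.subset_univ _, hgAD⟩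
    have hsm := hf.2.1 hsubset g (Finset.notMem_erase g Finset.univ)
    rw [Finset.insert_erase (Finset.mem_univ g)] at hsm
    rw [Finset.sum_insert hgD]
    have hU : A ∪ insert g D = insert g (A ∪ D) := union_insert g A D
    rw [hU]
    have := ih hdisj'
    linarith

lemma greedy_list (I : Finset α → Prop) (f : Finset α → ℝ) {G : Finset α}
    (h : Relation.ReflTransGen (GreedyStep I f) ∅ G) :
    ∃ l : List α, l.Nodup ∧ l.toFinset = G ∧
      ∀ i < l.length, GreedyStep I f ((l.take i).toFinset) ((l.take (i + 1)).toFinset) := by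
  induction h with
  | refl => exact ⟨[], by simp, by simp, by simp⟩
  | @tail S T hST hstep ih =>
    obtain ⟨l, hnd, hS, hsteps⟩ := ih
    obtain ⟨a, haS, hIa, hT, hmax⟩ := hstep
    have haL : a ∉ l := fun h => haS (hS ▸ List.mem_toFinset.2 h)
    refine ⟨l ++ [a], ?_, ?_, ?_⟩
    · simp [List.nodup_append, hnd, haL]
      exact fun x hx hxa => haL (hxa ▸ hx)
    · rw [hT, ← hS]; ext x; simp [or_comm]
    · intro i hi
      rw [List.length_append, List.length_singleton] at hi
      rcases Nat.lt_or_ge i l.length with h1 | h1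
      · rw [List.take_append_of_le_length (Nat.le_of_lt h1),
          List.take_append_of_le_length h1]
        exact hsteps i h1
      · have hieq : i = l.length := by omega
        subst hieq
        rw [List.take_left, List.take_of_length_le (by simp)]
        rw [hS]
        have : (l ++ [a]).toFinset = T := by
          rw [hT, ← hS]; ext x; simp [or_comm]
        rw [this]
        exact ⟨a, haS, hIa, hT, hmax⟩

end AuxLemmas

/-- Curvature bound for the greedy strategy in a matroid: `(1 + c) · f(G) ≥ f(O)`. -/
theorem greedy_curvature_bound_matroid {α : Type*} [DecidableEq α] [Fintype α]
    (I : Finset α → Prop) (hI : IsMatroid I)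
    (f : Finset α → ℝ) (hf : PolymatroidFn f)
    (hpos : ∃ j : α, 0 < f {j})
    (c : ℝ) (hc : c = totalCurvature f)
    (G O : Finset α) (hG : IsGreedy I f G) (hO : IsOptimal I f O) :
    (1 + c) * f G ≥ f O := by
  classical
  obtain ⟨⟨⟨S₀, hS₀⟩, hher⟩, haug⟩ := hI
  obtain ⟨hmono, hsub, hempty⟩ := hf
  obtain ⟨hGrun, hGmax⟩ := hG
  obtain ⟨hIO, _⟩ := hO
  obtain ⟨l, hnd, hlG, hsteps⟩ := greedy_list I f hGrun
  set k := l.length with hk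
  set P : ℕ → Finset α := fun i => (l.take i).toFinset with hP
  have hP0 : P 0 = ∅ := by simp [hP]
  have hPk : P k = G := by simp [hP, hk, hlG]
  have hPsub : ∀ {i j : ℕ}, i ≤ j → P i ⊆ P j := by
    intro i j hij x hx
    rw [hP, List.mem_toFinset] at hx ⊢
    have : l.take i = (l.take j).take i := by rw [List.take_take, min_eq_left hij]
    rw [this] at hx
    exact List.take_subset _ _ hx
  have hPG : ∀ i, P i ⊆ G := by
    intro i x hx
    rw [hP, List.mem_toFinset] at hx
    rw [← hlG, List.mem_toFinset]
    exact List.take_subset _ _ hx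
  set ρ : ℕ → ℝ := fun i => f (P (i + 1)) - f (P i) with hρ
  have hρ0 : ∀ i, 0 ≤ ρ i := fun i => sub_nonneg.2 (hmono (hPsub (Nat.le_succ i)))
  have hstep' : ∀ i, i < k → ∃ a, a ∉ P i ∧ I (insert a (P i)) ∧
      P (i + 1) = insert a (P i) ∧
      ∀ b ∉ P i, I (insert b (P i)) → f (insert b (P i)) ≤ f (P (i + 1)) := by
    intro i hi
    obtain ⟨a, ha, hIa, heq, hmax⟩ := hsteps i hi
    refine ⟨a, ha, hIa, heq, fun b hb hIb => ?_⟩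
    show f (insert b (P i)) ≤ f ((List.take (i + 1) l).toFinset)
    rw [heq]
    exact hmax b hb hIb
  have hIG : I G := by
    rcases Nat.eq_zero_or_pos k with h0 | hkpos
    · have hGe : G = ∅ := by rw [← hPk, h0, hP0]
      rw [hGe]
      exact hher hS₀ (Finset.empty_subset _)
    · obtain ⟨a, _, hIa, heq, _⟩ := hstep' (k - 1) (by omega)
      have hkk : k - 1 + 1 = k := by omega
      rw [← hPk, ← hkk, heq]
      exact hIa
  have hIP : ∀ i, I (P i) := fun i => hher hIG (hPG i)
  have hρanti : ∀ i, i + 1 < k → ρ (i + 1) ≤ ρ i := by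
    intro i hi
    obtain ⟨a, ha, hIa, heq, _⟩ := hstep' (i + 1) hi
    have hsub1 : P i ⊆ P (i + 1) := hPsub (Nat.le_succ i)
    have hanotPi : a ∉ P i := fun h => ha (hsub1 h)
    have hIaPi : I (insert a (P i)) := hher hIa (Finset.insert_subset_insert a hsub1)
    have h1 : f (insert a (P (i + 1))) - f (P (i + 1)) ≤ f (insert a (P i)) - f (P i) :=
      hsub hsub1 a ha
    obtain ⟨_, _, _, _, hmaxi⟩ := hstep' i (by omega)
    have h2 : f (insert a (P i)) ≤ f (P (i + 1)) := hmaxi a hanotPi hIaPi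
    have h3 : ρ (i + 1) = f (insert a (P (i + 1))) - f (P (i + 1)) := by
      show f (P (i + 1 + 1)) - f (P (i + 1)) = _
      rw [heq]
    have h4 : ρ i = f (P (i + 1)) - f (P i) := rfl
    rw [h3, h4]
    linarith
  -- curvature facts
  have hfj0 : ∀ j : α, 0 ≤ f {j} := fun j => hempty ▸ hmono (Finset.empty_subset {j})
  have hΔ0 : ∀ j : α, 0 ≤ f Finset.univ - f (Finset.univ.erase j) := fun j =>
    sub_nonneg.2 (hmono (Finset.erase_subset j Finset.univ))
  have hΔle : ∀ j : α, f Finset.univ - f (Finset.univ.erase j) ≤ f {j} - f ∅ := by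
    intro j
    have h := hsub (Finset.empty_subset (Finset.univ.erase j)) j
      (Finset.notMem_erase j Finset.univ)
    rw [Finset.insert_erase (Finset.mem_univ j)] at h
    simpa using h
  have hbdd : BddAbove {x : ℝ | ∃ j : α, f {j} ≠ f ∅ ∧
      x = 1 - (f Finset.univ - f (Finset.univ.erase j)) / (f {j} - f ∅)} := by
    apply Set.Finite.bddAbove
    apply Set.Finite.subset (Set.finite_range
      (fun j : α => 1 - (f Finset.univ - f (Finset.univ.erase j)) / (f {j} - f ∅)))
    rintro x ⟨j, _, rfl⟩
    exact ⟨j, rfl⟩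
  have hdpos : ∀ j : α, f {j} ≠ f ∅ → 0 < f {j} - f ∅ := by
    intro j hj
    rw [hempty] at hj ⊢
    have := hfj0 j
    rw [sub_zero]
    exact lt_of_le_of_ne this (Ne.symm hj)
  have hcmem : ∀ j : α, f {j} ≠ f ∅ →
      1 - (f Finset.univ - f (Finset.univ.erase j)) / (f {j} - f ∅) ≤ c :=
    fun j hj => hc ▸ le_csSup hbdd ⟨j, hj, rfl⟩
  have hc1 : c ≤ 1 := by
    rw [hc]
    apply Real.sSup_le _ zero_le_one
    rintro x ⟨j, hj, rfl⟩
    have h1 : 0 ≤ (f Finset.univ - f (Finset.univ.erase j)) / (f {j} - f ∅) :=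
      div_nonneg (hΔ0 j) (hdpos j hj).le
    linarith
  have hc0 : 0 ≤ c := by
    obtain ⟨j, hj⟩ := hpos
    have hne : f {j} ≠ f ∅ := by rw [hempty]; exact ne_of_gt hj
    have h1 := hcmem j hne
    have h2 : (f Finset.univ - f (Finset.univ.erase j)) / (f {j} - f ∅) ≤ 1 :=
      (div_le_one (hdpos j hne)).2 (hΔle j)
    linarith
  have hcurv : ∀ j : α, (1 - c) * f {j} ≤ f Finset.univ - f (Finset.univ.erase j) := by
    intro j
    by_cases hj : f {j} = f ∅
    · rw [hj, hempty, mul_zero]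
      exact hΔ0 j
    · have h1 := hcmem j hj
      have h2 : 1 - c ≤ (f Finset.univ - f (Finset.univ.erase j)) / (f {j} - f ∅) := by
        linarith
      have h3 := (le_div_iff₀ (hdpos j hj)).1 h2
      rw [hempty, sub_zero] at h3
      exact h3
  -- b and its partial sums
  set b : ℕ → ℝ := fun i => ((P (i + 1) \ O).card : ℝ) - ((P i \ O).card : ℝ) with hb
  have hBsum : ∀ M, ∑ i ∈ range M, b i = ((P M \ O).card : ℝ) := by
    intro M
    have := Finset.sum_range_sub (fun i => ((P i \ O).card : ℝ)) M
    rw [hb]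
    rw [this]
    simp [hP0]
  -- key1 : curvature lower bound sum
  have key1 : ∀ M, M ≤ k → (1 - c) * ∑ i ∈ range M, b i * ρ i ≤
      ∑ g ∈ P M \ O, (f Finset.univ - f (Finset.univ.erase g)) := by
    intro M
    induction M with
    | zero => simp [hP0]
    | succ M ih =>
      intro hM
      have hM' : M ≤ k := Nat.le_of_succ_le hM
      obtain ⟨a, ha, hIa, heq, _⟩ := hstep' M hM
      have hih := ih hM'
      by_cases haO : a ∈ O
      · have hPd : P (M + 1) \ O = P M \ O := by
          rw [heq, Finset.insert_sdiff_of_mem _ haO]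
        have hbM : b M = 0 := by rw [hb]; simp [hPd]
        rw [Finset.sum_range_succ, hbM, hPd]
        have hexp : (1 - c) * (∑ i ∈ range M, b i * ρ i + 0 * ρ M) =
            (1 - c) * ∑ i ∈ range M, b i * ρ i := by ring
        rw [hexp]
        exact hih
      · have hPd : P (M + 1) \ O = insert a (P M \ O) := by
          rw [heq, Finset.insert_sdiff_of_notMem _ haO]
        have hanotsd : a ∉ P M \ O := fun h => ha (Finset.mem_sdiff.1 h).1
        have hbM : b M = 1 := by
          rw [hb]
          simp only [hPd, Finset.card_insert_of_notMem hanotsd]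
          push_cast
          ring
        have hρle : ρ M ≤ f {a} := by
          have h := hsub (Finset.empty_subset (P M)) a ha
          have h2 : ρ M = f (insert a (P M)) - f (P M) := by
            show f (P (M + 1)) - f (P M) = _
            rw [heq]
          rw [h2]
          simpa [hempty] using h
        have hcurva : (1 - c) * ρ M ≤ f Finset.univ - f (Finset.univ.erase a) :=
          le_trans (mul_le_mul_of_nonneg_left hρle (by linarith)) (hcurv a)
        rw [Finset.sum_range_succ, hPd, Finset.sum_insert hanotsd, hbM]
        have hexp : (1 - c) * (∑ i ∈ range M, b i * ρ i + 1 * ρ M) =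
            (1 - c) * ∑ i ∈ range M, b i * ρ i + (1 - c) * ρ M := by ring
        rw [hexp]
        linarith
  -- key2 : T ≤ f G
  have hb01 : ∀ i, i < k → b i = 0 ∨ b i = 1 := by
    intro i hi
    obtain ⟨a, ha, _, heq, _⟩ := hstep' i hi
    by_cases haO : a ∈ O
    · left
      rw [hb]
      simp [heq, Finset.insert_sdiff_of_mem _ haO]
    · right
      have hanotsd : a ∉ P i \ O := fun h => ha (Finset.mem_sdiff.1 h).1
      rw [hb]
      simp only [heq, Finset.insert_sdiff_of_notMem _ haO,
        Finset.card_insert_of_notMem hanotsd]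
      push_cast
      ring
  have hT_le : ∑ i ∈ range k, b i * ρ i ≤ f G := by
    calc ∑ i ∈ range k, b i * ρ i ≤ ∑ i ∈ range k, ρ i := by
          apply Finset.sum_le_sum
          intro i hi
          rcases hb01 i (Finset.mem_range.1 hi) with h | h
          · rw [h, zero_mul]; exact hρ0 i
          · rw [h, one_mul]
      _ = f (P k) - f (P 0) := Finset.sum_range_sub (fun i => f (P i)) k
      _ = f G := by rw [hPk, hP0, hempty, sub_zero]
  -- t and τ
  set t : α → ℕ := fun j => sInf {i : ℕ | ¬ I (insert j (P i))} with ht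
  have ht_spec : ∀ j ∈ O \ G, 0 < t j ∧ t j ≤ k ∧ ¬I (insert j (P (t j))) ∧
      I (insert j (P (t j - 1))) := by
    intro j hj
    have hjO := (Finset.mem_sdiff.1 hj).1
    have hjG := (Finset.mem_sdiff.1 hj).2
    have hkmem : k ∈ {i : ℕ | ¬ I (insert j (P i))} := by
      rw [Set.mem_setOf_eq, hPk]
      exact hGmax j hjG
    have h1 : t j ≤ k := Nat.sInf_le hkmem
    have h2 : ¬ I (insert j (P (t j))) := Nat.sInf_mem ⟨k, hkmem⟩
    have h3 : 0 < t j := by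
      rcases Nat.eq_zero_or_pos (t j) with h0 | h0
      · exfalso
        apply h2
        rw [h0, hP0]
        have : insert j (∅ : Finset α) = {j} := rfl
        rw [this]
        exact hher hIO (Finset.singleton_subset_iff.2 hjO)
      · exact h0
    have h4 : I (insert j (P (t j - 1))) := by
      by_contra hcon
      have : t j ≤ t j - 1 := Nat.sInf_le hcon
      omega
    exact ⟨h3, h1, h2, h4⟩
  set τ : α → ℕ := fun j => t j - 1 with hτ
  have hτk : ∀ j ∈ O \ G, τ j < k := by
    intro j hj
    obtain ⟨h3, h1, _, _⟩ := ht_spec j hj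
    have hτj : τ j = t j - 1 := rfl
    omega
  -- key3
  have key3 : ∀ j ∈ O \ G, f (insert j G) - f G ≤ ρ (τ j) := by
    intro j hj
    obtain ⟨h3, h1, h2, h4⟩ := ht_spec j hj
    have hjG := (Finset.mem_sdiff.1 hj).2
    have hsubPG : P (τ j) ⊆ G := hPG _
    have hjP : j ∉ P (τ j) := fun h => hjG (hsubPG h)
    obtain ⟨_, _, _, _, hmaxτ⟩ := hstep' (τ j) (hτk j hj)
    have hg : f (insert j (P (τ j))) ≤ f (P (τ j + 1)) := hmaxτ j hjP h4
    have hsm := hsub hsubPG j hjG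
    have hρτ : ρ (τ j) = f (P (τ j + 1)) - f (P (τ j)) := rfl
    rw [hρτ]
    linarith
  -- key4 : fiberwise sum
  set w : ℕ → ℝ := fun i => (((O \ G).filter (fun j => τ j = i)).card : ℝ) with hw
  have key4 : ∑ j ∈ O \ G, ρ (τ j) = ∑ i ∈ range k, w i * ρ i := by
    rw [← Finset.sum_fiberwise_of_maps_to (fun j hj => Finset.mem_range.2 (hτk j hj))
      (fun j => ρ (τ j))]
    apply Finset.sum_congr rfl
    intro i _
    rw [Finset.sum_congr rfl (fun j hj => by rw [(Finset.mem_filter.1 hj).2])]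
    rw [Finset.sum_const, nsmul_eq_mul]
  -- key5 : counting inequality
  have key5 : ∀ M, M ≤ k → ∑ i ∈ range M, w i ≤ ∑ i ∈ range M, b i := by
    intro M hM
    rw [hBsum M]
    have hcardeq : (((O \ G).filter (fun j => τ j < M)).card : ℕ) =
        ∑ i ∈ range M, ((O \ G).filter (fun j => τ j = i)).card := by
      rw [Finset.card_eq_sum_card_fiberwise
        (f := τ) (t := range M)
        (fun j hj => Finset.mem_range.2 (Finset.mem_filter.1 hj).2)]
      apply Finset.sum_congr rfl
      intro i hi
      congr 1
      rw [Finset.filter_filter]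
      apply Finset.filter_congr
      intro j _
      constructor
      · exact fun h => h.2
      · exact fun h => ⟨lt_of_eq_of_lt h (Finset.mem_range.1 hi), h⟩
    have hScard : ((O \ G).filter (fun j => τ j < M)).card ≤ (P M \ O).card := by
      set Sset := ((O \ G).filter (fun j => τ j < M)) ∪ (O ∩ P M) with hSset
      have hSO : Sset ⊆ O := by
        apply Finset.union_subset
        · exact (Finset.filter_subset _ _).trans (Finset.sdiff_subset)
        · exact Finset.inter_subset_left
      have hIS : I Sset := hher hIO hSO
      have hcard : Sset.card ≤ (P M).card := by
        by_contra hlt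
        push_neg at hlt
        obtain ⟨j, hjS, hjP, hIj⟩ := haug (hIP M) hIS hlt
        have hjf : j ∈ (O \ G).filter (fun j => τ j < M) := by
          rcases Finset.mem_union.1 hjS with h | h
          · exact h
          · exact absurd (Finset.mem_inter.1 h).2 hjP
        have hjdf := Finset.mem_filter.1 hjf
        obtain ⟨h3, h1, h2, _⟩ := ht_spec j hjdf.1
        have htM : t j ≤ M := by
          have h5 := hjdf.2
          have hτj : τ j = t j - 1 := rfl
          omega
        exact h2 (hher hIj (Finset.insert_subset_insert j (hPsub htM)))
      have hdisj : Disjoint ((O \ G).filter (fun j => τ j < M)) (O ∩ P M) := by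
        rw [Finset.disjoint_left]
        intro x hx hx2
        have hxG : x ∉ G := (Finset.mem_sdiff.1 (Finset.mem_filter.1 hx).1).2
        exact hxG (hPG M (Finset.mem_inter.1 hx2).2)
      have hcard2 : ((O \ G).filter (fun j => τ j < M)).card + (O ∩ P M).card =
          Sset.card := (Finset.card_union_of_disjoint hdisj).symm
      have hPMsplit : (P M \ O).card + (P M ∩ O).card = (P M).card :=
        Finset.card_sdiff_add_card_inter (P M) O
      have hOI : (O ∩ P M).card = (P M ∩ O).card := by rw [Finset.inter_comm]
      omega
    have hwsum : ∑ i ∈ range M, w i =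
        ((((O \ G).filter (fun j => τ j < M)).card : ℕ) : ℝ) := by
      rw [hcardeq]
      push_cast
      rfl
    rw [hwsum]
    exact_mod_cast hScard
  -- Abel
  have habel : ∑ i ∈ range k, w i * ρ i ≤ ∑ i ∈ range k, b i * ρ i := by
    have h := abel_sum (fun i => b i - w i) ρ k (fun i _ => hρ0 i) hρanti
      (fun M hM => by
        rw [Finset.sum_sub_distrib]
        linarith [key5 M hM])
    have hsplit : ∑ i ∈ range k, (b i - w i) * ρ i =
        ∑ i ∈ range k, b i * ρ i - ∑ i ∈ range k, w i * ρ i := by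
      rw [← Finset.sum_sub_distrib]
      apply Finset.sum_congr rfl
      intro i _
      ring
    linarith [hsplit ▸ h]
  -- assembly
  have A1 : f O + ∑ g ∈ G \ O, (f Finset.univ - f (Finset.univ.erase g)) ≤
      f (O ∪ (G \ O)) := telescope_lower f ⟨hmono, hsub, hempty⟩ O (G \ O) Finset.sdiff_disjoint
  have hU : O ∪ (G \ O) = G ∪ (O \ G) := by
    rw [Finset.union_sdiff_self_eq_union, Finset.union_sdiff_self_eq_union, Finset.union_comm]
  have A2 : f (G ∪ (O \ G)) ≤ f G + ∑ j ∈ O \ G, (f (insert j G) - f G) :=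
    telescope_upper f ⟨hmono, hsub, hempty⟩ G (O \ G)
  have A3 : ∑ j ∈ O \ G, (f (insert j G) - f G) ≤ ∑ j ∈ O \ G, ρ (τ j) :=
    Finset.sum_le_sum key3
  have A4 : (1 - c) * ∑ i ∈ range k, b i * ρ i ≤
      ∑ g ∈ G \ O, (f Finset.univ - f (Finset.univ.erase g)) := by
    have := key1 k le_rfl
    rwa [hPk] at this
  have A6 : c * ∑ i ∈ range k, b i * ρ i ≤ c * f G :=
    mul_le_mul_of_nonneg_left hT_le hc0
  rw [hU] at A1
  have hexp : (1 - c) * ∑ i ∈ range k, b i * ρ i =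
      ∑ i ∈ range k, b i * ρ i - c * ∑ i ∈ range k, b i * ρ i := by ring
  have hgoal : (1 + c) * f G = f G + c * f G := by ring
  rw [ge_iff_le, hgoal]
  rw [hexp] at A4
  rw [key4] at A3
  linarith
end

section
/- Let K ≥ 1 with K ≤ |X|, let (X, 𝓘) be the uniform matroid of rank K, and let f : 2^X → ℝ be a polymatroid set function with f({j}) > 0 for some j ∈ X, whose total curvature c satisfies 0 < c ≤ 1. Then every greedy solution G and every optimal solution O satisfy f(G) ≥ (1/c) · (1 − (1 − c/K)^K) · f(O); moreover (1/c)(1 − (1 − c/K)^K) > (1 − e^{−c})/c. -/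
open Finset

variable {α : Type*} [DecidableEq α] [Fintype α]

set_option linter.unusedSectionVars false

private lemma powb_aux (c x : ℝ) (hc0 : 0 ≤ c) (hc1 : c ≤ 1) (k : ℕ)
    (hk : (k : ℝ) ≤ x) : 0 ≤ (1 - c/x)^k ∧ (1 - c/x)^k ≤ 1 := by
  rcases Nat.eq_zero_or_pos k with hk0 | hk1
  · subst hk0; simp
  · have hx1 : (1:ℝ) ≤ x := le_trans (by exact_mod_cast hk1) hk
    have hx0 : (0:ℝ) < x := by linarith
    have h1 : 0 ≤ c / x := div_nonneg hc0 hx0.le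
    have h2 : c / x ≤ 1 := (div_le_one hx0).2 (by linarith)
    exact ⟨pow_nonneg (by linarith) _, pow_le_one₀ (by linarith) (by linarith)⟩

private lemma pow_ge_aux (c x : ℝ) (hc0 : 0 ≤ c) (hc1 : c ≤ 1) (k : ℕ)
    (hk : (k : ℝ) ≤ x) : 1 - c ≤ (1 - c/x)^k := by
  rcases Nat.eq_zero_or_pos k with hk0 | hk1
  · subst hk0; simp; linarith
  · have hx1 : (1:ℝ) ≤ x := le_trans (by exact_mod_cast hk1) hk
    have hx0 : (0:ℝ) < x := by linarith
    have h2 : c / x ≤ 1 := (div_le_one hx0).2 (by linarith)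
    have h1 : 0 ≤ c / x := div_nonneg hc0 hx0.le
    have hb : (-2:ℝ) ≤ -(c/x) := by linarith
    have h := one_add_mul_le_pow hb k
    have hkx : (k:ℝ) * (c/x) ≤ c := by
      have h3 : (k:ℝ) * (c/x) ≤ x * (c/x) := mul_le_mul_of_nonneg_right hk h1
      rwa [mul_div_cancel₀ c (ne_of_gt hx0)] at h3
    have : 1 + (k:ℝ) * (-(c/x)) = 1 - (k:ℝ)*(c/x) := by ring
    rw [this] at h
    calc 1 - c ≤ 1 - (k:ℝ)*(c/x) := by linarith
      _ ≤ (1 + -(c/x))^k := h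
      _ = (1 - c/x)^k := by ring_nf

private lemma key_ineq (c : ℝ) (hc0 : 0 < c) (hc1 : c ≤ 1) :
    ∀ m : ℕ, 1 ≤ m → ∀ x : ℝ, (m : ℝ) ≤ x →
      1 - c + (x - 1) * (1 - c/(x-1))^(m-1) ≤ x * (1 - c/x)^m := by
  intro m hm
  induction m, hm using Nat.le_induction with
  | base =>
    intro x hx
    have hx0 : (0:ℝ) < x := by push_cast at hx; linarith
    have : x * (1 - c/x) = x - c := by field_simp
    simp only [Nat.sub_self, pow_zero, pow_one, mul_one, this]
    linarith
  | succ m hm ih =>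
    intro x hx
    have hxm : ((m:ℝ)) ≤ x := by push_cast at hx ⊢; linarith
    have hx2 : (2:ℝ) ≤ x := by
      have : (1:ℝ) ≤ (m:ℝ) := by exact_mod_cast hm
      push_cast at hx; linarith
    have hx0 : (0:ℝ) < x := by linarith
    have hx10 : (0:ℝ) < x - 1 := by linarith
    have hIH := ih x hxm
    set θ : ℝ := 1 - c/x with hθ
    set ψ : ℝ := 1 - c/(x-1) with hψ
    clear_value θ ψ
    have hθ0 : 0 ≤ θ := by
      have : c/x ≤ 1 := (div_le_one hx0).2 (by linarith)
      simp [hθ]; linarith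
    have hφge : 1 - c ≤ ψ^(m-1) := by
      rw [hψ]
      apply pow_ge_aux c (x-1) hc0.le hc1
      have : ((m-1:ℕ):ℝ) ≤ (m:ℝ) - 1 + 1 - 1 := by
        rcases Nat.exists_eq_add_of_le hm with ⟨j, rfl⟩
        push_cast [Nat.add_sub_cancel_left]
        push_cast at *
        linarith
      push_cast at hx
      calc ((m-1:ℕ):ℝ) ≤ (m:ℝ) - 1 + 1 - 1 := this
        _ ≤ x - 1 := by linarith
    -- multiply IH by θ
    have h1 : θ * (1 - c + (x-1) * ψ^(m-1)) ≤ θ * (x * θ^m) := mul_le_mul_of_nonneg_left hIH hθ0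
    have h2 : θ * (x * θ^m) = x * θ^(m+1) := by ring
    have hmm : m - 1 + 1 = m := Nat.succ_pred_eq_of_pos hm
    have h3 : ψ^(m+1-1) = ψ^(m-1) * ψ := by
      rw [Nat.add_sub_cancel]
      conv_lhs => rw [← hmm]
      rw [pow_succ]
    have h4 : 1 - c + (x-1) * ψ^(m+1-1) ≤ θ * (1 - c + (x-1)*ψ^(m-1)) := by
      rw [h3]
      have hkey : θ * (1 - c + (x-1)*ψ^(m-1)) - (1 - c + (x-1) * (ψ^(m-1) * ψ))
          = c/x * (ψ^(m-1) - (1-c)) := by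
        rw [hθ, hψ]; field_simp; ring
      have : 0 ≤ c/x * (ψ^(m-1) - (1-c)) :=
        mul_nonneg (div_nonneg hc0.le hx0.le) (by linarith)
      nlinarith [hkey, this]
    calc 1 - c + (x-1) * ψ^(m+1-1) ≤ θ * (1 - c + (x-1)*ψ^(m-1)) := h4
      _ ≤ x * θ^(m+1) := by rw [← h2]; exact h1

private lemma step_notin (c ρ D x : ℝ) (m : ℕ) (hc0 : 0 < c) (hc1 : c ≤ 1)
    (hm : 1 ≤ m) (hmx : (m:ℝ) ≤ x) (hρ : 0 ≤ ρ) (hD : D ≤ x * ρ) :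
    max D 0 / c * (1 - (1 - c/x)^m) ≤ ρ + max (D - c*ρ) 0 / c * (1 - (1 - c/x)^(m-1)) := by
  have hx1 : (1:ℝ) ≤ x := le_trans (by exact_mod_cast hm) hmx
  have hx0 : (0:ℝ) < x := by linarith
  obtain ⟨hθ₂0, hθ₂1⟩ := powb_aux c x hc0.le hc1 (m-1)
    (by calc ((m-1:ℕ):ℝ) ≤ (m:ℝ) := by exact_mod_cast Nat.sub_le m 1
          _ ≤ x := hmx)
  obtain ⟨hθ₁0, hθ₁1⟩ := powb_aux c x hc0.le hc1 m hmx
  have hθge : 1 - c ≤ (1-c/x)^m := pow_ge_aux c x hc0.le hc1 m hmx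
  have hRnn : 0 ≤ max (D - c*ρ) 0 / c * (1 - (1 - c/x)^(m-1)) :=
    mul_nonneg (div_nonneg (le_max_right _ _) hc0.le) (by linarith)
  rcases le_or_gt D 0 with hD0 | hD0
  · rw [max_eq_right hD0]
    simp only [zero_div, zero_mul]
    linarith
  · rw [max_eq_left hD0.le]
    rcases le_or_gt (D - c*ρ) 0 with hD1 | hD1
    · have hle : D / c * (1 - (1-c/x)^m) ≤ D := by
        have h1 : D / c * (1 - (1-c/x)^m) ≤ D / c * c := by
          apply mul_le_mul_of_nonneg_left (by linarith) (div_nonneg hD0.le hc0.le)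
        rwa [div_mul_cancel₀ D (ne_of_gt hc0)] at h1
      nlinarith [mul_nonneg (sub_nonneg.2 hc1) hρ]
    · rw [max_eq_left hD1.le]
      have hmm : m - 1 + 1 = m := Nat.succ_pred_eq_of_pos hm
      have hpow : (1-c/x)^m = (1-c/x)^(m-1) * (1-c/x) := by
        conv_lhs => rw [← hmm]
        rw [pow_succ]
      set φ : ℝ := (1-c/x)^(m-1) with hφ
      clear_value φ
      have hident : c*ρ + (D - c*ρ)*(1-φ) - D*(1 - φ*(1-c/x)) = c*φ/x*(x*ρ - D) := by
        field_simp; ring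
      have hnn : 0 ≤ c*φ/x*(x*ρ - D) :=
        mul_nonneg (div_nonneg (mul_nonneg hc0.le hθ₂0) hx0.le) (by linarith)
      have hmain : D*(1 - (1-c/x)^m) ≤ c*ρ + (D - c*ρ)*(1-φ) := by
        rw [hpow]; linarith
      -- divide by c
      have hinv : 0 < 1/c := by positivity
      have h2 := mul_le_mul_of_nonneg_left hmain (le_of_lt hinv)
      have e1 : 1/c * (D*(1 - (1-c/x)^m)) = D / c * (1 - (1-c/x)^m) := by field_simp
      have e2 : 1/c * (c*ρ + (D - c*ρ)*(1-φ)) = ρ + (D - c*ρ)/c * (1-φ) := by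
        field_simp
      rw [e1, e2] at h2
      exact h2

private lemma step_in (c ρ D x : ℝ) (m : ℕ) (hc0 : 0 < c) (hc1 : c ≤ 1)
    (hm : 1 ≤ m) (hmx : (m:ℝ) ≤ x) (hρ : 0 ≤ ρ) (hD : D ≤ x * ρ) :
    max D 0 / c * (1 - (1 - c/x)^m) ≤ ρ + max (D - ρ) 0 / c * (1 - (1 - c/(x-1))^(m-1)) := by
  have hx1 : (1:ℝ) ≤ x := le_trans (by exact_mod_cast hm) hmx
  have hx0 : (0:ℝ) < x := by linarith
  have hm1x : ((m-1:ℕ):ℝ) ≤ x - 1 := by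
    have : ((m-1:ℕ):ℝ) = (m:ℝ) - 1 := by
      rcases Nat.exists_eq_add_of_le hm with ⟨j, rfl⟩
      push_cast [Nat.add_sub_cancel_left]; ring
    rw [this]; linarith
  obtain ⟨hφ0, hφ1⟩ := powb_aux c (x-1) hc0.le hc1 (m-1) hm1x
  obtain ⟨hθ₁0, hθ₁1⟩ := powb_aux c x hc0.le hc1 m hmx
  have hθge : 1 - c ≤ (1-c/x)^m := pow_ge_aux c x hc0.le hc1 m hmx
  have hkey := key_ineq c hc0 hc1 m hm x hmx
  have hRnn : 0 ≤ max (D - ρ) 0 / c * (1 - (1 - c/(x-1))^(m-1)) :=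
    mul_nonneg (div_nonneg (le_max_right _ _) hc0.le) (by linarith)
  rcases le_or_gt D 0 with hD0 | hD0
  · rw [max_eq_right hD0]
    simp only [zero_div, zero_mul]
    linarith
  · rw [max_eq_left hD0.le]
    rcases le_or_gt (D - ρ) 0 with hD1 | hD1
    · have hle : D / c * (1 - (1-c/x)^m) ≤ D := by
        have h1 : D / c * (1 - (1-c/x)^m) ≤ D / c * c := by
          apply mul_le_mul_of_nonneg_left (by linarith) (div_nonneg hD0.le hc0.le)
        rwa [div_mul_cancel₀ D (ne_of_gt hc0)] at h1
      linarith
    · rw [max_eq_left hD1.le]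
      set φ : ℝ := (1-c/(x-1))^(m-1) with hφdef
      set θ : ℝ := (1-c/x)^m with hθdef
      clear_value φ θ
      -- main: D*(1-θ) ≤ c*ρ + (D-ρ)*(1-φ)
      have hmain : D*(1-θ) ≤ c*ρ + (D-ρ)*(1-φ) := by
        rcases le_or_gt θ φ with hcase | hcase
        · have h1 : (x*ρ)*(θ-φ) ≤ D*(θ-φ) := by
            apply mul_le_mul_of_nonpos_right hD (by linarith)
          have h2 : 0 ≤ ρ * (x*θ - (1-c) - (x-1)*φ) := mul_nonneg hρ (by linarith)
          nlinarith [h1, h2]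
        · have h1 : ρ*(θ-φ) ≤ D*(θ-φ) := by
            apply mul_le_mul_of_nonneg_right (by linarith) (by linarith)
          have h2 : 0 ≤ ρ * (θ - (1-c)) := mul_nonneg hρ (by linarith)
          nlinarith [h1, h2]
      have hinv : 0 < 1/c := by positivity
      have h2 := mul_le_mul_of_nonneg_left hmain (le_of_lt hinv)
      have e1 : 1/c * (D*(1 - θ)) = D / c * (1 - θ) := by field_simp
      have e2 : 1/c * (c*ρ + (D - ρ)*(1-φ)) = ρ + (D - ρ)/c * (1-φ) := by
        field_simp
      rw [e1, e2] at h2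
      exact h2


private lemma f_union_le (f : Finset α → ℝ) (hsub : SetSubmodular f)
    (A : Finset α) : ∀ T : Finset α, f (A ∪ T) ≤ f A + ∑ j ∈ T \ A, (f (insert j A) - f A) := by
  intro T
  induction T using Finset.induction_on with
  | empty => simp
  | @insert a s ha ih =>
    by_cases hA : a ∈ A
    · have h1 : A ∪ insert a s = A ∪ s := by
        rw [union_insert, insert_eq_self.2 (mem_union_left _ hA)]
      have h2 : insert a s \ A = s \ A := insert_sdiff_of_mem _ hA
      rw [h1, h2]; exact ih
    · have haU : a ∉ A ∪ s := by simp [hA, ha]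
      have hsubm := hsub (subset_union_left (s₁ := A) (s₂ := s)) a haU
      have h2 : insert a s \ A = insert a (s \ A) := insert_sdiff_of_notMem _ hA
      have h3 : a ∉ s \ A := fun h => ha (mem_sdiff.1 h).1
      rw [union_insert, h2, sum_insert h3]
      linarith

private lemma f_union_ge (f : Finset α → ℝ) (hsub : SetSubmodular f)
    (A : Finset α) : ∀ T : Finset α,
    f A + ∑ j ∈ T \ A, (f univ - f (univ.erase j)) ≤ f (A ∪ T) := by
  intro T
  induction T using Finset.induction_on with
  | empty => simp
  | @insert a s ha ih =>
    by_cases hA : a ∈ A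
    · have h1 : A ∪ insert a s = A ∪ s := by
        rw [union_insert, insert_eq_self.2 (mem_union_left _ hA)]
      have h2 : insert a s \ A = s \ A := insert_sdiff_of_mem _ hA
      rw [h1, h2]; exact ih
    · have haU : a ∉ A ∪ s := by simp [hA, ha]
      have hsubm := hsub (show A ∪ s ⊆ univ.erase a by
        rw [subset_erase]; exact ⟨subset_univ _, haU⟩) a (notMem_erase a univ)
      rw [insert_erase (mem_univ a)] at hsubm
      have h2 : insert a s \ A = insert a (s \ A) := insert_sdiff_of_notMem _ hA
      have h3 : a ∉ s \ A := fun h => ha (mem_sdiff.1 h).1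
      rw [union_insert, h2, sum_insert h3]
      linarith

/-- Curvature bound for the greedy strategy in a uniform matroid of rank `K`:
`f(G) ≥ (1/c)(1 - (1 - c/K)^K) · f(O)`, and
`(1/c)(1 - (1 - c/K)^K) > (1 - e^{-c})/c`. -/
theorem greedy_curvature_bound_uniform_matroid {α : Type*} [DecidableEq α] [Fintype α]
    (K : ℕ) (hK1 : 1 ≤ K) (hK2 : K ≤ Fintype.card α)
    (f : Finset α → ℝ) (hf : PolymatroidFn f)
    (hpos : ∃ j : α, 0 < f {j})
    (c : ℝ) (hc : c = totalCurvature f) (hc0 : 0 < c) (hc1 : c ≤ 1)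
    (G O : Finset α)
    (hG : IsGreedy (fun S : Finset α => S.card ≤ K) f G)
    (hO : IsOptimal (fun S : Finset α => S.card ≤ K) f O) :
    f G ≥ (1 / c) * (1 - (1 - c / (K : ℝ)) ^ K) * f O ∧
      (1 / c) * (1 - (1 - c / (K : ℝ)) ^ K) > (1 - Real.exp (-c)) / c := by
  obtain ⟨hmono, hsub, hempty⟩ := hf
  obtain ⟨hchain, hterm⟩ := hG
  obtain ⟨hOK, hOopt⟩ := hO
  have hfO0 : 0 ≤ f O := by
    have := hmono (empty_subset O); rw [hempty] at this; exact this
  -- curvature bound per element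
  have hcurv : ∀ j : α, (1 - c) * f {j} ≤ f univ - f (univ.erase j) := by
    intro j
    have hmonoj : f (univ.erase j) ≤ f univ := hmono (erase_subset _ _)
    by_cases hj : f {j} = f ∅
    · rw [hj, hempty, mul_zero]; linarith
    · have hjpos : 0 < f {j} - f ∅ := by
        have := hmono (empty_subset {j})
        cases lt_or_eq_of_le this with
        | inl h => linarith
        | inr h => exact absurd h.symm hj
      have hmem : (1 - (f univ - f (univ.erase j)) / (f {j} - f ∅)) ∈
          {x : ℝ | ∃ j : α, f {j} ≠ f ∅ ∧
            x = 1 - (f Finset.univ - f (Finset.univ.erase j)) / (f {j} - f ∅)} :=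
        ⟨j, hj, rfl⟩
      have hbdd : BddAbove {x : ℝ | ∃ j : α, f {j} ≠ f ∅ ∧
          x = 1 - (f Finset.univ - f (Finset.univ.erase j)) / (f {j} - f ∅)} := by
        refine ⟨1, fun x hx => ?_⟩
        obtain ⟨i, hi, rfl⟩ := hx
        have hipos : 0 < f {i} - f ∅ := by
          have := hmono (empty_subset {i})
          cases lt_or_eq_of_le this with
          | inl h => linarith
          | inr h => exact absurd h.symm hi
        have hnum : 0 ≤ f univ - f (univ.erase i) := by
          have := hmono (erase_subset i (univ : Finset α)); linarith
        have := div_nonneg hnum hipos.le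
        linarith
      have hle : (1 - (f univ - f (univ.erase j)) / (f {j} - f ∅)) ≤ c := by
        rw [hc]; exact le_csSup hbdd hmem
      rw [hempty, sub_zero] at hle hjpos
      have h2 : (1 - c) ≤ (f univ - f (univ.erase j)) / f {j} := by linarith
      calc (1 - c) * f {j} ≤ ((f univ - f (univ.erase j)) / f {j}) * f {j} :=
            mul_le_mul_of_nonneg_right h2 (by linarith)
        _ = f univ - f (univ.erase j) := div_mul_cancel₀ _ (ne_of_gt hjpos)
  -- G has exactly K elements
  have hGle : G.card ≤ K := by
    rcases (Relation.ReflTransGen.cases_tail hchain) with h | ⟨W, _, hW⟩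
    · simp [h]
    · obtain ⟨a, _, haK, rfl, _⟩ := hW
      exact haK
  have hGK : G.card = K := by
    by_contra hne
    have hlt : G.card < K := lt_of_le_of_ne hGle hne
    have hGne : G ≠ univ := by
      intro h
      rw [h, card_univ] at hlt
      omega
    have : ∃ a, a ∉ G := by
      by_contra h
      push_neg at h
      exact hGne (eq_univ_iff_forall.2 h)
    obtain ⟨a, ha⟩ := this
    exact hterm a ha (show (insert a G).card ≤ K by rw [card_insert_of_notMem ha]; omega)
  -- main induction
  have main : ∀ (S : Finset α)
      (_ : Relation.ReflTransGen (GreedyStep (fun S : Finset α => S.card ≤ K) f) S G),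
      ∀ N : ℝ, N ≤ ∑ j ∈ S \ O, f {j} →
      f S + max (f O - f S + (1 - c) * N) 0 / c *
        (1 - (1 - c / ((K - (S ∩ O).card : ℕ) : ℝ)) ^ (K - S.card)) ≤ f G := by
    intro S h
    induction h using Relation.ReflTransGen.head_induction_on with
    | refl =>
      intro N _
      simp [hGK]
    | @head S S' hstep hrest ih =>
      obtain ⟨a, haS, haK, rfl, hmax⟩ := hstep
      intro N hN
      have hρ0 : 0 ≤ f (insert a S) - f S := by
        have := hmono (subset_insert a S); linarith
      have hcardS : S.card + 1 ≤ K := by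
        rwa [card_insert_of_notMem haS] at haK
      have hSOcard : (S ∩ O).card ≤ S.card := card_le_card inter_subset_left
      have hm1 : 1 ≤ K - S.card := by omega
      have hmn : K - S.card ≤ K - (S ∩ O).card := by omega
      have hn1 : 1 ≤ K - (S ∩ O).card := by omega
      have hx : ((K - S.card : ℕ) : ℝ) ≤ ((K - (S ∩ O).card : ℕ) : ℝ) := by
        exact_mod_cast hmn
      -- the constraint
      have hC : f O - f S + (1 - c) * N ≤ ((K - (S ∩ O).card : ℕ) : ℝ) * (f (insert a S) - f S) := by
        have h2 : f O + ∑ j ∈ S \ O, (f univ - f (univ.erase j)) ≤ f (O ∪ S) :=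
          f_union_ge f hsub O S
        have h3 : (1 - c) * N ≤ ∑ j ∈ S \ O, (f univ - f (univ.erase j)) := by
          calc (1 - c) * N ≤ (1 - c) * ∑ j ∈ S \ O, f {j} :=
                mul_le_mul_of_nonneg_left hN (by linarith)
            _ = ∑ j ∈ S \ O, (1 - c) * f {j} := mul_sum _ _ _
            _ ≤ ∑ j ∈ S \ O, (f univ - f (univ.erase j)) :=
                sum_le_sum (fun j _ => hcurv j)
        have h4 : f (O ∪ S) ≤ f S + ∑ j ∈ O \ S, (f (insert j S) - f S) := by
          have := f_union_le f hsub S O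
          rwa [union_comm] at this
        have h5 : ∑ j ∈ O \ S, (f (insert j S) - f S) ≤
            (O \ S).card • (f (insert a S) - f S) := by
          apply sum_le_card_nsmul
          intro j hj
          have hjS : j ∉ S := (mem_sdiff.1 hj).2
          have hjcard : (insert j S).card ≤ K := by
            rw [card_insert_of_notMem hjS]; exact hcardS
          have := hmax j hjS hjcard
          linarith
        have h6 : (O \ S).card ≤ K - (S ∩ O).card := by
          have h7 : (O \ S).card + (O ∩ S).card = O.card := card_sdiff_add_card_inter O S
          have h8 : (S ∩ O).card = (O ∩ S).card := by rw [inter_comm]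
          omega
        have h9 : ((O \ S).card : ℝ) * (f (insert a S) - f S) ≤
            ((K - (S ∩ O).card : ℕ) : ℝ) * (f (insert a S) - f S) :=
          mul_le_mul_of_nonneg_right (by exact_mod_cast h6) hρ0
        have h10 : (O \ S).card • (f (insert a S) - f S) =
            ((O \ S).card : ℝ) * (f (insert a S) - f S) := nsmul_eq_mul _ _
        linarith
      have hiS : (insert a S).card = S.card + 1 := card_insert_of_notMem haS
      have e1 : K - (insert a S).card = (K - S.card) - 1 := by omega
      by_cases haO : a ∈ O
      · -- a ∈ O case
        have hset : insert a S \ O = S \ O := insert_sdiff_of_mem _ haO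
        have hIH := ih N (by rw [hset]; exact hN)
        have hiO : insert a S ∩ O = insert a (S ∩ O) := insert_inter_of_mem haO
        have hiOcard : (insert a S ∩ O).card = (S ∩ O).card + 1 := by
          rw [hiO, card_insert_of_notMem (fun h => haS (mem_of_mem_inter_left h))]
        have e2 : ((K - (insert a S ∩ O).card : ℕ) : ℝ) =
            ((K - (S ∩ O).card : ℕ) : ℝ) - 1 := by
          rw [hiOcard]
          have : K - ((S ∩ O).card + 1) = (K - (S ∩ O).card) - 1 := by omega
          rw [this]
          push_cast [Nat.cast_sub hn1]
          ring
        have eD : f O - f (insert a S) + (1 - c) * N =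
            (f O - f S + (1 - c) * N) - (f (insert a S) - f S) := by ring
        rw [e1, e2, eD] at hIH
        have hstepB := step_in c (f (insert a S) - f S) (f O - f S + (1 - c) * N)
          ((K - (S ∩ O).card : ℕ) : ℝ) (K - S.card) hc0 hc1 hm1
          (le_trans (by exact_mod_cast le_refl (K - S.card)) hx) hρ0 hC
        linarith
      · -- a ∉ O case
        have hset : insert a S \ O = insert a (S \ O) := insert_sdiff_of_notMem _ haO
        have hfa : f (insert a S) - f S ≤ f {a} := by
          have h := hsub (empty_subset S) a haS
          have : insert a (∅ : Finset α) = {a} := rfl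
          rw [this, hempty] at h
          linarith
        have hNb : N + (f (insert a S) - f S) ≤ ∑ j ∈ insert a S \ O, f {j} := by
          rw [hset, sum_insert (fun h => haS (mem_sdiff.1 h).1)]
          linarith
        have hIH := ih (N + (f (insert a S) - f S)) hNb
        have hiO : insert a S ∩ O = S ∩ O := insert_inter_of_notMem haO
        have eD : f O - f (insert a S) + (1 - c) * (N + (f (insert a S) - f S)) =
            (f O - f S + (1 - c) * N) - c * (f (insert a S) - f S) := by ring
        rw [e1, hiO, eD] at hIH
        have hstepA := step_notin c (f (insert a S) - f S) (f O - f S + (1 - c) * N)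
          ((K - (S ∩ O).card : ℕ) : ℝ) (K - S.card) hc0 hc1 hm1 hx hρ0 hC
        linarith
  -- instantiate at ∅
  have h0 := main ∅ hchain 0 (by simp)
  rw [hempty] at h0
  simp only [empty_inter, card_empty, Nat.sub_zero, mul_zero, add_zero, sub_zero,
    zero_add] at h0
  rw [max_eq_left hfO0] at h0
  have hbound : f G ≥ (1 / c) * (1 - (1 - c / (K : ℝ)) ^ K) * f O := by
    have : (1 / c) * (1 - (1 - c / (K : ℝ)) ^ K) * f O =
        f O / c * (1 - (1 - c / (K : ℝ)) ^ K) := by ring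
    rw [this]
    exact h0
  refine ⟨hbound, ?_⟩
  -- second part
  have hK0 : (0:ℝ) < K := by exact_mod_cast hK1
  have hKne : K ≠ 0 := by omega
  have hb : 1 - c / K < Real.exp (-(c / K)) := by
    have h := Real.add_one_lt_exp (x := -(c / K)) (by
      have : c / (K:ℝ) ≠ 0 := by positivity
      simpa using this)
    linarith
  have h0b : 0 ≤ 1 - c / (K : ℝ) := by
    have : c / (K:ℝ) ≤ 1 := (div_le_one hK0).2 (le_trans hc1 (by exact_mod_cast hK1))
    linarith
  have hpow : (1 - c / (K:ℝ)) ^ K < Real.exp (-c) := by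
    calc (1 - c / (K:ℝ)) ^ K < (Real.exp (-(c / K))) ^ K := by
          exact pow_lt_pow_left₀ hb h0b hKne
      _ = Real.exp (-c) := by
          rw [← Real.exp_nat_mul]
          congr 1
          field_simp
  have hlt : (1 - Real.exp (-c)) / c < (1 - (1 - c / (K:ℝ)) ^ K) / c := by
    gcongr
  calc (1 - Real.exp (-c)) / c < (1 - (1 - c / (K:ℝ)) ^ K) / c := hlt
    _ = (1 / c) * (1 - (1 - c / (K : ℝ)) ^ K) := by ring
end

section
/- Let X be a finite set, let k + 1 ≤ |X|, and let f be a polymatroid function on the uniform matroid of rank k, i.e., f : {S ⊆ X : |S| ≤ k} → ℝ with f(∅) = 0, f(A) ≤ f(B) whenever A ⊆ B and |B| ≤ k, and f(A∪{j}) − f(A) ≥ f(B∪{j}) − f(B) whenever A ⊆ B ⊆ X, j ∈ X∖B, and |B∪{j}| ≤ k. Then there exists a polymatroid function g on the uniform matroid of rank k+1 (i.e., g : {S ⊆ X : |S| ≤ k+1} → ℝ with g(∅) = 0, g monotone and submodular on sets of size at most k+1) agreeing with f on all sets of size at most k, if and only if for every A ⊆ X with |A| = k+1, every B ⊂ A with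 |B| = k, and every a ∈ B: f(B) − f(B∖{a}) ≥ f(B*) − f(A∖{a}), where B* is a k-element subset of A maximizing f among k-element subsets of A. -/
open Finset

variable {α : Type*} [DecidableEq α] [Fintype α]

/-! Necessity: submodularity of an extension `g` at the `(k+1)`-set `A` gives
`f B - f (B \ {a}) ≥ g A - f (A \ {a})`, and monotonicity gives `g A ≥ f B*`.
Sufficiency: put `g A := f B*` on sets of more than `k` elements. This `g` is monotone, and a
submodularity inequality `g (A' ∪ {j}) - g A' ≥ g (B ∪ {j}) - g B` with `|B ∪ {j}| = k + 1`
reduces, by submodularity of `f` from `A'` up to `B \ {b}` for some `b ∈ B \ A'`, to the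
condition for the `(k+1)`-set `B ∪ {j}`. -/

section Extension

variable {α : Type*} {f : Finset α → ℝ} {k : ℕ} {A B S : Finset α}

noncomputable def maxExtension (k : ℕ) (f : Finset α → ℝ) (S : Finset α) : ℝ :=
  if h : k < #S then (S.powersetCard k).sup' (powersetCard_nonempty.2 h.le) f else f S

theorem maxExtension_of_card_le (h : #S ≤ k) : maxExtension k f S = f S :=
  dif_neg h.not_gt

theorem le_maxExtension (hk : k < #S) (hBS : B ⊆ S) (hB : #B = k) :
    f B ≤ maxExtension k f S := by
  rw [maxExtension, dif_pos hk]
  exact le_sup' f (mem_powersetCard.2 ⟨hBS, hB⟩)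

theorem exists_maxExtension_eq (hk : k < #S) :
    ∃ B ⊆ S, #B = k ∧ maxExtension k f S = f B := by
  rw [maxExtension, dif_pos hk]
  obtain ⟨B, hB, hmax⟩ := exists_mem_eq_sup' (powersetCard_nonempty.2 hk.le) f
  exact ⟨B, (mem_powersetCard.1 hB).1, (mem_powersetCard.1 hB).2, hmax⟩

theorem maxExtension_mono (hf : ∀ ⦃A B : Finset α⦄, A ⊆ B → #B ≤ k → f A ≤ f B) :
    Monotone (maxExtension k f) := by
  intro A B hAB
  by_cases hB : #B ≤ k
  · rw [maxExtension_of_card_le hB, maxExtension_of_card_le ((card_le_card hAB).trans hB)]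
    exact hf hAB hB
  by_cases hA : #A ≤ k
  · obtain ⟨C, hAC, hCB, hC⟩ := exists_subsuperset_card_eq hAB hA (not_le.1 hB).le
    rw [maxExtension_of_card_le hA]
    exact (hf hAC hC.le).trans (le_maxExtension (not_le.1 hB) hCB hC)
  · rw [maxExtension, maxExtension, dif_pos (not_le.1 hA), dif_pos (not_le.1 hB)]
    exact sup'_mono f (powersetCard_mono hAB) _

variable [DecidableEq α]

theorem PolymatroidOn.sub_le_sub_erase {I : Finset α → Prop} {C : Finset α} {a : α}
    (hf : PolymatroidOn I f) (hA : I A) (hBA : B ⊆ A) (ha : a ∈ B) (hCA : C ⊆ A) :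
    f C - f (A.erase a) ≤ f B - f (B.erase a) := by
  have hsub := hf.2.2 (erase_subset_erase a hBA) a (notMem_erase a A)
    (by rwa [insert_erase (hBA ha)])
  rw [insert_erase ha, insert_erase (hBA ha)] at hsub
  linarith [hf.2.1 hCA hA]

theorem maxExtension_submodular (hf : PolymatroidOn (fun S => #S ≤ k) f)
    (hcond : ∀ A, #A = k + 1 → ∀ B ⊆ A, #B = k → ∀ a ∈ B,
      maxExtension k f A - f (A.erase a) ≤ f B - f (B.erase a))
    ⦃A B : Finset α⦄ (hAB : A ⊆ B) (j : α) (hj : j ∉ B) (hjB : #(insert j B) ≤ k + 1) :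
    maxExtension k f (insert j A) - maxExtension k f A ≥
      maxExtension k f (insert j B) - maxExtension k f B := by
  have hjA : #(insert j A) ≤ #(insert j B) := card_le_card (insert_subset_insert j hAB)
  by_cases hjBk : #(insert j B) ≤ k
  · have hBk : #B ≤ k := (card_le_card (subset_insert j B)).trans hjBk
    rw [maxExtension_of_card_le hjBk, maxExtension_of_card_le (hjA.trans hjBk),
      maxExtension_of_card_le hBk, maxExtension_of_card_le ((card_le_card hAB).trans hBk)]
    exact hf.2.2 hAB j hj hjBk
  have hjBcard : #(insert j B) = k + 1 := by omega
  have hBk : #B = k := by rw [card_insert_of_notMem hj] at hjBcard; omega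
  obtain rfl | hAB' := hAB.eq_or_ssubset
  · exact le_rfl
  obtain ⟨b, hbB, hbA⟩ := exists_of_ssubset hAB'
  have hAk : #(insert j A) ≤ k := by
    have := card_lt_card hAB'
    have := card_insert_le j A
    omega
  have hjb : j ∉ B.erase b := fun h => hj (mem_of_mem_erase h)
  rw [maxExtension_of_card_le hAk,
    maxExtension_of_card_le ((card_le_card (subset_insert j A)).trans hAk),
    maxExtension_of_card_le hBk.le]
  calc f (insert j A) - f A
      ≥ f (insert j (B.erase b)) - f (B.erase b) :=
        hf.2.2 (subset_erase.2 ⟨hAB, hbA⟩) j hjb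
          (show #(insert j (B.erase b)) ≤ k by
            rw [card_insert_of_notMem hjb, card_erase_add_one hbB, hBk])
    _ = f ((insert j B).erase b) - f (B.erase b) := by
        rw [erase_insert_of_ne (ne_of_mem_of_not_mem hbB hj).symm]
    _ ≥ maxExtension k f (insert j B) - f B := by
        linarith [hcond (insert j B) hjBcard B (subset_insert j B) hBk b hbB]

theorem polymatroidOn_maxExtension (hf : PolymatroidOn (fun S => #S ≤ k) f)
    (hcond : ∀ A, #A = k + 1 → ∀ B ⊆ A, #B = k → ∀ a ∈ B,
      maxExtension k f A - f (A.erase a) ≤ f B - f (B.erase a)) :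
    PolymatroidOn (fun S => #S ≤ k + 1) (maxExtension k f) :=
  ⟨(maxExtension_of_card_le (Nat.zero_le k)).trans hf.1,
    fun _ _ hAB _ => maxExtension_mono hf.2.1 hAB, maxExtension_submodular hf hcond⟩

end Extension

theorem polymatroid_extension_iff_general {α : Type*} [DecidableEq α]
    (k : ℕ)
    (f : Finset α → ℝ)
    (hf0 : f ∅ = 0)
    (hfmono : ∀ A B : Finset α, A ⊆ B → B.card ≤ k → f A ≤ f B)
    (hfsub : ∀ A B : Finset α, A ⊆ B → ∀ j ∉ B, (insert j B).card ≤ k →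
      f (insert j A) - f A ≥ f (insert j B) - f B) :
    (∃ g : Finset α → ℝ, g ∅ = 0 ∧
        (∀ A B : Finset α, A ⊆ B → B.card ≤ k + 1 → g A ≤ g B) ∧
        (∀ A B : Finset α, A ⊆ B → ∀ j ∉ B, (insert j B).card ≤ k + 1 →
          g (insert j A) - g A ≥ g (insert j B) - g B) ∧
        (∀ S : Finset α, S.card ≤ k → g S = f S)) ↔
      (∀ A : Finset α, A.card = k + 1 → ∀ B ⊂ A, B.card = k → ∀ a ∈ B,
        ∀ Bs ⊂ A, Bs.card = k → (∀ B' ⊂ A, B'.card = k → f B' ≤ f Bs) →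
          f B - f (B.erase a) ≥ f Bs - f (A.erase a)) := by
  constructor
  · rintro ⟨g, hg0, hgmono, hgsub, hgf⟩ A hA B hBA hB a ha Bs hBsA hBs -
    have key := PolymatroidOn.sub_le_sub_erase (I := fun S => #S ≤ k + 1) (f := g)
      ⟨hg0, hgmono, hgsub⟩ hA.le hBA.subset ha hBsA.subset
    rwa [hgf _ hB.le, hgf _ hBs.le, hgf _ ((card_erase_le).trans hB.le),
      hgf _ (by rw [card_erase_of_mem (hBA.subset ha), hA]; omega)] at key
  · intro h
    obtain ⟨hg0, hgmono, hgsub⟩ := polymatroidOn_maxExtension ⟨hf0, hfmono, hfsub⟩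
      fun A hA B hBA hB a ha => by
        have hkA : k < #A := hA ▸ k.lt_succ_self
        have hss {S : Finset α} (hS : S ⊆ A) (hSk : #S = k) : S ⊂ A :=
          ssubset_of_subset_of_ne hS (by rintro rfl; omega)
        obtain ⟨Bs, hBsA, hBs, hmax⟩ := exists_maxExtension_eq (f := f) hkA
        rw [hmax]
        exact h A hA B (hss hBA hB) hB a ha Bs (hss hBsA hBs) hBs
          fun B' hB'A hB' => hmax ▸ le_maxExtension hkA hB'A.subset hB'
    exact ⟨maxExtension k f, hg0, hgmono, hgsub, fun S => maxExtension_of_card_le⟩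

/-- A polymatroid function on the uniform matroid of rank `k` extends to a
polymatroid function on the uniform matroid of rank `k + 1` if and only if
`f(B) - f(B∖{a}) ≥ f(B*) - f(A∖{a})` for every `(k+1)`-set `A`, every
`k`-subset `B ⊂ A`, every `a ∈ B`, where `B*` maximizes `f` among `k`-subsets
of `A`. -/
theorem polymatroid_extension_iff {α : Type*} [DecidableEq α] [Fintype α]
    (k : ℕ) (hk : k + 1 ≤ Fintype.card α)
    (f : Finset α → ℝ)
    (hf0 : f ∅ = 0)
    (hfmono : ∀ A B : Finset α, A ⊆ B → B.card ≤ k → f A ≤ f B)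
    (hfsub : ∀ A B : Finset α, A ⊆ B → ∀ j ∉ B, (insert j B).card ≤ k →
      f (insert j A) - f A ≥ f (insert j B) - f B) :
    (∃ g : Finset α → ℝ, g ∅ = 0 ∧
        (∀ A B : Finset α, A ⊆ B → B.card ≤ k + 1 → g A ≤ g B) ∧
        (∀ A B : Finset α, A ⊆ B → ∀ j ∉ B, (insert j B).card ≤ k + 1 →
          g (insert j A) - g A ≥ g (insert j B) - g B) ∧
        (∀ S : Finset α, S.card ≤ k → g S = f S)) ↔
      (∀ A : Finset α, A.card = k + 1 → ∀ B ⊂ A, B.card = k → ∀ a ∈ B,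
        ∀ Bs ⊂ A, Bs.card = k → (∀ B' ⊂ A, B'.card = k → f B' ≤ f Bs) →
          f B - f (B.erase a) ≥ f Bs - f (A.erase a)) :=
  polymatroid_extension_iff_general k f hf0 hfmono hfsub
end

section
/- Let (X, 𝓘) be a matroid, let f : 𝓘 → ℝ be a polymatroid function on 𝓘 with f({j}) > 0 for some j with {j} ∈ 𝓘, and let b(f) be the partial curvature of f. Let g : 2^X → ℝ be a polymatroid set function that agrees with f on 𝓘. Then c(g) = b(f) if and only if g(X) − g(X∖{a}) ≥ (1 − b(f)) · g({a}) for every a ∈ X, with equality for some a ∈ X. -/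
open Finset

variable {α : Type*} [DecidableEq α] [Fintype α]

/-!
Submodularity makes the marginal gain of `j` at the ground set no larger than at any `A ∋ j`,
and on independent sets `g` agrees with `f`; hence every ratio entering `b(f)` is dominated by
the ratio of the same `j` entering `c(g)`, so `b(f) ≤ c(g)`. Since `c(g)` is a maximum of
finitely many ratios with positive denominators, `c(g) ≤ t` is exactly the family of
inequalities `g(X) - g(X ∖ {a}) ≥ (1 - t) g({a})`, and the maximum is attained, which gives the
equality case for `t = c(g)`.
-/

theorem SetMonotone.apply_empty_lt {α : Type*} {g : Finset α → ℝ} (hg : SetMonotone g)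
    {A : Finset α} (hA : g A ≠ g ∅) : g ∅ < g A :=
  (hg (empty_subset A)).lt_of_ne hA.symm

theorem SetSubmodular.sub_erase_anti {α : Type*} [DecidableEq α] {g : Finset α → ℝ}
    (hg : SetSubmodular g) {A B : Finset α} (hAB : A ⊆ B) {j : α} (hj : j ∈ A) :
    g B - g (B.erase j) ≤ g A - g (A.erase j) := by
  have h := hg (erase_subset_erase j hAB) j (notMem_erase j B)
  rwa [insert_erase hj, insert_erase (hAB hj)] at h

theorem totalCurvature_set_finite (g : Finset α → ℝ) :
    {x : ℝ | ∃ j : α, g {j} ≠ g ∅ ∧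
      x = 1 - (g univ - g (univ.erase j)) / (g {j} - g ∅)}.Finite :=
  (Set.finite_range fun j : α => 1 - (g univ - g (univ.erase j)) / (g {j} - g ∅)).subset
    (by rintro _ ⟨j, -, rfl⟩; exact ⟨j, rfl⟩)

theorem le_totalCurvature (g : Finset α → ℝ) {j : α} (hj : g {j} ≠ g ∅) :
    1 - (g univ - g (univ.erase j)) / (g {j} - g ∅) ≤ totalCurvature g :=
  le_csSup (totalCurvature_set_finite g).bddAbove ⟨j, hj, rfl⟩

theorem totalCurvature_le_iff {g : Finset α → ℝ} (hmono : SetMonotone g) (h0 : g ∅ = 0)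
    (hne : ∃ j, g {j} ≠ 0) {t : ℝ} :
    totalCurvature g ≤ t ↔ ∀ a : α, g univ - g (univ.erase a) ≥ (1 - t) * g {a} := by
  have hpos : ∀ {a : α}, g {a} ≠ g ∅ → 0 < g {a} := fun ha => h0 ▸ hmono.apply_empty_lt ha
  constructor
  · intro hc a
    by_cases ha : g {a} = g ∅
    · rw [ha, h0, mul_zero]
      exact sub_nonneg.2 (hmono (erase_subset a univ))
    · have h := (le_totalCurvature g ha).trans hc
      rw [h0, sub_zero] at h
      rw [ge_iff_le, ← le_div_iff₀ (hpos ha)]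
      linarith
  · intro h
    obtain ⟨j, hj⟩ := hne
    refine csSup_le ⟨_, j, h0 ▸ hj, rfl⟩ ?_
    rintro _ ⟨a, ha, rfl⟩
    have h' := (le_div_iff₀ (hpos ha)).2 (h a)
    rw [h0, sub_zero]
    linarith

theorem exists_sub_erase_eq_one_sub_totalCurvature_mul {g : Finset α → ℝ} (h0 : g ∅ = 0)
    (hne : ∃ j, g {j} ≠ 0) :
    ∃ a : α, g univ - g (univ.erase a) = (1 - totalCurvature g) * g {a} := by
  obtain ⟨j, hj⟩ := hne
  obtain ⟨a, ha, hc⟩ :=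
    Set.Nonempty.csSup_mem (by exact ⟨_, j, h0 ▸ hj, rfl⟩) (totalCurvature_set_finite g)
  refine ⟨a, ?_⟩
  rw [totalCurvature, hc, h0, sub_zero, sub_sub_cancel, div_mul_cancel₀ _ (h0 ▸ ha)]

theorem partialCurvature_le_totalCurvature {I : Finset α → Prop} (hI : Hereditary I)
    {f g : Finset α → ℝ} (hmono : SetMonotone g) (hsub : SetSubmodular g)
    (hagree : ∀ S, I S → g S = f S) (hne : ∃ j, I {j} ∧ g {j} ≠ g ∅) :
    partialCurvature I f ≤ totalCurvature g := by
  obtain ⟨j₀, hj₀I, hj₀⟩ := hne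
  have hempty : g ∅ = f ∅ := hagree ∅ (hI hj₀I (empty_subset _))
  refine csSup_le ⟨_, j₀, {j₀}, hj₀I, mem_singleton_self j₀, ?_, rfl⟩ ?_
  · rwa [← hagree _ hj₀I, ← hempty]
  rintro _ ⟨j, A, hA, hjA, hj, rfl⟩
  have hjI : I {j} := hI hA (singleton_subset_iff.2 hjA)
  rw [← hagree _ hjI, ← hempty] at hj ⊢
  rw [← hagree A hA, ← hagree _ (hI hA (erase_subset j A))]
  refine le_trans ?_ (le_totalCurvature g hj)
  gcongr 1 - ?_ / _
  · exact sub_nonneg.2 (hmono (empty_subset _))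
  · exact hsub.sub_erase_anti (subset_univ A) hjA

theorem totalCurvature_eq_partialCurvature_iff_general {α : Type*} [DecidableEq α] [Fintype α]
    (I : Finset α → Prop) (hI : IsMatroid I)
    (f : Finset α → ℝ)
    (hpos : ∃ j : α, I {j} ∧ 0 < f {j})
    (g : Finset α → ℝ) (hg : PolymatroidFn g)
    (hagree : ∀ S, I S → g S = f S) :
    totalCurvature g = partialCurvature I f ↔
      ((∀ a : α, g Finset.univ - g (Finset.univ.erase a) ≥
          (1 - partialCurvature I f) * g {a}) ∧
        ∃ a : α, g Finset.univ - g (Finset.univ.erase a) =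
          (1 - partialCurvature I f) * g {a}) := by
  obtain ⟨hmono, hsub, h0⟩ := hg
  obtain ⟨j, hjI, hj⟩ := hpos
  have hgj : g {j} ≠ 0 := by rw [hagree _ hjI]; exact hj.ne'
  constructor
  · intro hc
    rw [← hc]
    exact ⟨(totalCurvature_le_iff hmono h0 ⟨j, hgj⟩).1 le_rfl,
      exists_sub_erase_eq_one_sub_totalCurvature_mul h0 ⟨j, hgj⟩⟩
  · rintro ⟨hle, -⟩
    exact le_antisymm ((totalCurvature_le_iff hmono h0 ⟨j, hgj⟩).2 hle)
      (partialCurvature_le_totalCurvature hI.1.2 hmono hsub hagree ⟨j, hjI, h0 ▸ hgj⟩)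

/-- Characterization of extensions `g` of `f` whose total curvature equals the
partial curvature `b(f)`. -/
theorem totalCurvature_eq_partialCurvature_iff {α : Type*} [DecidableEq α] [Fintype α]
    (I : Finset α → Prop) (hI : IsMatroid I)
    (f : Finset α → ℝ) (hf : PolymatroidOn I f)
    (hpos : ∃ j : α, I {j} ∧ 0 < f {j})
    (g : Finset α → ℝ) (hg : PolymatroidFn g)
    (hagree : ∀ S, I S → g S = f S) :
    totalCurvature g = partialCurvature I f ↔
      ((∀ a : α, g Finset.univ - g (Finset.univ.erase a) ≥
          (1 - partialCurvature I f) * g {a}) ∧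
        ∃ a : α, g Finset.univ - g (Finset.univ.erase a) =
          (1 - partialCurvature I f) * g {a}) :=
  totalCurvature_eq_partialCurvature_iff_general I hI f hpos g hg hagree
end
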